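/- arXiv:0708.1084 — 6 statements merged into one kernel-verified Lean document; each statement's English description precedes it below -/
import Mathlib

section
/- Let A be a real n×n matrix and B a real n×d matrix. The rank condition Rank[B, AB, ..., A^{n-1}B] = n holds if and only if for every t > 0 the linear map L_t : L²([0,t]; ℝ^d) → ℝ^n given by L_t u = ∫₀ᵗ e^{sA} B u(s) ds is surjective. -/
/-!
Both conditions say that no nonzero covector `x` annihilates the control directions. For the rank
condition these are the `A ^ k B` with `k < n`; by Cayley–Hamilton they may be taken for all `k`,
and then the power series of `e^{sA}` and, conversely, repeated differentiation at `s = 0` show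
that `x A ^ k B = 0` for all `k` iff `x e^{sA} B = 0` on `[0, t]`. On the analytic side, `L_t`
maps the control `s ↦ (e^{sA} B)ᵀ z` to `W_t z`, where `W_t = ∫₀ᵗ e^{sA} B (e^{sA} B)ᵀ ds` is
the controllability Gramian, and `⟪z, W_t z⟫ = ∫₀ᵗ |(e^{sA} B)ᵀ z|²`; so if `x e^{sA} B = 0` on
`[0, t]` forces `x = 0`, then `W_t` is injective, hence surjective, and so is `L_t`. Conversely,
a vector orthogonal to all `e^{sA} B v` is orthogonal to the range of `L_t`.
-/

open MeasureTheory Matrix Set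
open WithLp (ofLp toLp)
open scoped RealInnerProductSpace

theorem Matrix.rank_eq_card_iff_vecMul_eq_zero {m n R : Type*} [Fintype m] [Fintype n]
    [Field R] (M : Matrix m n R) : M.rank = Fintype.card m ↔ ∀ x, x ᵥ* M = 0 → x = 0 := by
  rw [rank_eq_finrank_span_row, ← Set.finrank, eq_comm,
    ← linearIndependent_iff_card_eq_finrank_span, Fintype.linearIndependent_iff]
  simp only [vecMul_eq_sum, funext_iff, Pi.zero_apply]
  rfl

section Kalman

variable {n : ℕ} {p R : Type*}

def Matrix.kalman [Semiring R] (A : Matrix (Fin n) (Fin n) R) (B : Matrix (Fin n) p R) :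
    Matrix (Fin n) (Fin n × p) R :=
  of fun i jk => (A ^ (jk.1 : ℕ) * B) i jk.2

theorem Matrix.vecMul_kalman_eq_zero_iff [Semiring R] (A : Matrix (Fin n) (Fin n) R)
    (B : Matrix (Fin n) p R) (x : Fin n → R) :
    x ᵥ* kalman A B = 0 ↔ ∀ i < n, x ᵥ* (A ^ i * B) = 0 := by
  refine ⟨fun h i hi => ?_, fun h => ?_⟩
  · ext j
    exact congrFun h (⟨i, hi⟩, j)
  · ext ⟨i, j⟩
    exact congrFun (h i i.isLt) j

theorem Matrix.rank_kalman_eq_iff [Fintype p] [Field R] (A : Matrix (Fin n) (Fin n) R)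
    (B : Matrix (Fin n) p R) :
    (kalman A B).rank = n ↔ ∀ x, (∀ i < n, x ᵥ* (A ^ i * B) = 0) → x = 0 := by
  simpa only [Fintype.card_fin, vecMul_kalman_eq_zero_iff] using
    rank_eq_card_iff_vecMul_eq_zero (kalman A B)

end Kalman

theorem Matrix.pow_mem_of_forall_lt_card {m R : Type*} [Fintype m] [DecidableEq m] [CommRing R]
    [Nontrivial R] {A : Matrix m m R} {W : Submodule R (Matrix m m R)}
    (h : ∀ i < Fintype.card m, A ^ i ∈ W) (k : ℕ) : A ^ k ∈ W := by
  rcases isEmpty_or_nonempty m with hm | hm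
  · exact Subsingleton.elim (0 : Matrix m m R) (A ^ k) ▸ W.zero_mem
  have hdeg : (Polynomial.X ^ k %ₘ A.charpoly).natDegree < Fintype.card m := by
    simpa using Polynomial.natDegree_modByMonic_lt _ A.charpoly_monic
      (fun h1 => by simpa using congrArg Polynomial.natDegree h1)
  rw [pow_eq_aeval_mod_charpoly, Polynomial.aeval_eq_sum_range' hdeg]
  exact W.sum_mem fun i hi => W.smul_mem _ (h i (Finset.mem_range.1 hi))

theorem NormedSpace.exp_mem_of_forall_pow_mem {𝔸 : Type*} [Ring 𝔸] [Algebra ℝ 𝔸]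
    [TopologicalSpace 𝔸] [IsTopologicalRing 𝔸] {W : Submodule ℝ 𝔸} (hW : IsClosed (W : Set 𝔸))
    {a : 𝔸} (h : ∀ k, a ^ k ∈ W) : exp a ∈ W := by
  rw [exp_eq_tsum ℝ]
  exact tsum_mem hW fun k => W.smul_mem _ (h k)

theorem Set.EqOn.hasDerivAt_eq_zero {E : Type*} [NormedAddCommGroup E] [NormedSpace ℝ E]
    {f f' : ℝ → E} {a b : ℝ} (hab : a < b) (hf : ∀ x, HasDerivAt f (f' x) x)
    (hf' : ContinuousOn f' (Icc a b)) (h : EqOn f 0 (Icc a b)) : EqOn f' 0 (Icc a b) := by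
  have hIoo : EqOn f' 0 (Ioo a b) := fun x hx =>
    (hf x).unique <| (hasDerivAt_const x (0 : E)).congr_of_eventuallyEq <|
      Filter.eventuallyEq_of_mem (Icc_mem_nhds hx.1 hx.2) h
  simpa [closure_Ioo hab.ne] using hIoo.of_subset_closure hf' continuousOn_const
    Ioo_subset_Icc_self (by rw [closure_Ioo hab.ne])

section MatrixExp

open NormedSpace

variable {m : Type*} [Fintype m] [DecidableEq m] {F : Type*} [NormedAddCommGroup F]
  [NormedSpace ℝ F]

-- The `ℓ∞` operator norm induces the product topology, so `exp` is unchanged by this choice.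
attribute [local instance] Matrix.linftyOpNormedRing Matrix.linftyOpNormedAlgebra

theorem Matrix.continuous_exp_smul (A : Matrix m m ℝ) : Continuous fun s : ℝ => exp (s • A) :=
  exp_continuous.comp (continuous_id.smul continuous_const)

theorem Matrix.pow_eq_zero_of_exp_smul_eq_zero (A : Matrix m m ℝ) {t : ℝ} (ht : 0 < t)
    (φ : Matrix m m ℝ →ₗ[ℝ] F) (h : ∀ s ∈ Icc 0 t, φ (exp (s • A)) = 0) (k : ℕ) :
    φ (A ^ k) = 0 := by
  induction k generalizing φ with
  | zero => simpa using h 0 ⟨le_rfl, ht.le⟩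
  | succ k ih =>
    have hderiv (s : ℝ) : HasDerivAt (fun σ : ℝ => φ (exp (σ • A))) (φ (A * exp (s • A))) s :=
      φ.toContinuousLinearMap.hasFDerivAt.comp_hasDerivAt s (hasDerivAt_exp_smul_const' A s)
    have hcont : Continuous fun s : ℝ => φ (A * exp (s • A)) :=
      φ.continuous_of_finiteDimensional.comp (continuous_const.mul (continuous_exp_smul A))
    simpa [pow_succ'] using ih (φ ∘ₗ LinearMap.mulLeft ℝ A)
      fun s hs => EqOn.hasDerivAt_eq_zero ht hderiv hcont.continuousOn h hs

theorem Matrix.exp_smul_eq_zero_of_pow_eq_zero (A : Matrix m m ℝ) (φ : Matrix m m ℝ →ₗ[ℝ] F)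
    (h : ∀ k, φ (A ^ k) = 0) (s : ℝ) : φ (exp (s • A)) = 0 :=
  exp_mem_of_forall_pow_mem (LinearMap.ker φ).closed_of_finiteDimensional
    (fun k => by simp [smul_pow, h k])

theorem Matrix.forall_exp_smul_eq_zero_iff (A : Matrix m m ℝ) {t : ℝ} (ht : 0 < t)
    (φ : Matrix m m ℝ →ₗ[ℝ] F) :
    (∀ s ∈ Icc 0 t, φ (exp (s • A)) = 0) ↔ ∀ i < Fintype.card m, φ (A ^ i) = 0 :=
  ⟨fun h i _ => pow_eq_zero_of_exp_smul_eq_zero A ht φ h i, fun h s _ =>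
    exp_smul_eq_zero_of_pow_eq_zero A φ (pow_mem_of_forall_lt_card (W := LinearMap.ker φ) h) s⟩

end MatrixExp

theorem Matrix.vecMul_exp_smul_mul_eq_zero_iff {m p : Type*} [Fintype m] [DecidableEq m]
    [Fintype p] (A : Matrix m m ℝ) (B : Matrix m p ℝ) (x : m → ℝ) {t : ℝ} (ht : 0 < t) :
    (∀ s ∈ Icc 0 t, x ᵥ* (NormedSpace.exp (s • A) * B) = 0) ↔
      ∀ i < Fintype.card m, x ᵥ* (A ^ i * B) = 0 := by
  simpa [vecMul_vecMul] using
    forall_exp_smul_eq_zero_iff A ht (B.vecMulLinear ∘ₗ vecMulBilin ℝ ℝ x)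

theorem inner_setIntegral_eq_zero {α F : Type*} [MeasurableSpace α] {μ : Measure α}
    [NormedAddCommGroup F] [InnerProductSpace ℝ F] [CompleteSpace F] {f : α → F} {s : Set α}
    {z : F} (h : ∀ x ∈ s, ⟪z, f x⟫ = 0) : ⟪z, ∫ x in s, f x ∂μ⟫ = 0 := by
  by_cases hf : IntegrableOn f s μ
  · rw [← integral_inner hf]
    exact setIntegral_eq_zero_of_forall_eq_zero h
  · rw [integral_undef hf, inner_zero_right]

theorem eq_zero_of_surjective_setIntegral_apply {α E F : Type*} [MeasurableSpace α]
    {μ : Measure α} [NormedAddCommGroup E] [NormedSpace ℝ E] [NormedAddCommGroup F]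
    [InnerProductSpace ℝ F] [CompleteSpace F] {p : ENNReal} {s : Set α} {G : α → E →L[ℝ] F}
    (hG : Function.Surjective fun u : Lp E p (μ.restrict s) => ∫ x in s, G x (u x) ∂μ)
    {z : F} (hz : ∀ x ∈ s, ∀ v, ⟪z, G x v⟫ = 0) : z = 0 := by
  obtain ⟨u, hu⟩ := hG z
  rw [← inner_self_eq_zero (𝕜 := ℝ)]
  nth_rw 2 [← hu]
  exact inner_setIntegral_eq_zero fun x hx => hz x hx _

theorem eqOn_zero_of_setIntegral_Icc_eq_zero {f : ℝ → ℝ} {a b : ℝ} (hab : a < b)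
    (hf : ContinuousOn f (Icc a b)) (hf₀ : ∀ x ∈ Icc a b, 0 ≤ f x)
    (h : ∫ x in Icc a b, f x = 0) : EqOn f 0 (Icc a b) := by
  rw [setIntegral_eq_zero_iff_of_nonneg_ae ((ae_restrict_mem measurableSet_Icc).mono hf₀)
    hf.integrableOn_Icc] at h
  exact Measure.eqOn_Icc_of_ae_eq volume hab.ne h hf continuousOn_const

section Gramian

variable {E F : Type*} [NormedAddCommGroup E] [InnerProductSpace ℝ E] [CompleteSpace E]
  [NormedAddCommGroup F] [InnerProductSpace ℝ F] [CompleteSpace F]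
  {G : ℝ → E →L[ℝ] F} {a b : ℝ}

theorem ContinuousOn.adjoint {α : Type*} [TopologicalSpace α] {G : α → E →L[ℝ] F} {s : Set α}
    (hG : ContinuousOn G s) : ContinuousOn (fun x => (G x).adjoint) s :=
  ContinuousLinearMap.adjoint.continuous.comp_continuousOn hG

noncomputable def gramian (G : ℝ → E →L[ℝ] F) (a b : ℝ) : F →L[ℝ] F :=
  ∫ s in Icc a b, G s ∘L (G s).adjoint

theorem gramian_apply (hG : ContinuousOn G (Icc a b)) (z : F) :
    gramian G a b z = ∫ s in Icc a b, G s ((G s).adjoint z) :=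
  ContinuousLinearMap.integral_apply (hG.clm_comp hG.adjoint).integrableOn_Icc z

theorem inner_gramian_apply_self (hG : ContinuousOn G (Icc a b)) (z : F) :
    ⟪z, gramian G a b z⟫ = ∫ s in Icc a b, ‖(G s).adjoint z‖ ^ 2 := by
  rw [gramian_apply hG,
    ← integral_inner (hG.clm_apply (hG.adjoint.clm_apply continuousOn_const)).integrableOn_Icc]
  congr 1 with s
  rw [← ContinuousLinearMap.adjoint_inner_left, real_inner_self_eq_norm_sq]

theorem gramian_apply_mem_range (hG : ContinuousOn G (Icc a b)) (z : F) :
    ∃ u : Lp E 2 (volume.restrict (Icc a b)), ∫ s in Icc a b, G s (u s) = gramian G a b z := by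
  have hv : ContinuousOn (fun s => (G s).adjoint z) (Icc a b) :=
    hG.adjoint.clm_apply continuousOn_const
  obtain ⟨C, hC⟩ := isCompact_Icc.exists_bound_of_continuousOn hv
  have hmem : MemLp (fun s => (G s).adjoint z) 2 (volume.restrict (Icc a b)) :=
    MemLp.of_bound (hv.aestronglyMeasurable measurableSet_Icc) C
      ((ae_restrict_mem measurableSet_Icc).mono hC)
  refine ⟨hmem.toLp, ?_⟩
  rw [gramian_apply hG]
  exact integral_congr_ae (hmem.coeFn_toLp.mono fun s hs => congrArg (G s) hs)

theorem gramian_injective (hG : ContinuousOn G (Icc a b)) (hab : a < b)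
    (h : ∀ z, (∀ s ∈ Icc a b, ∀ v, ⟪z, G s v⟫ = 0) → z = 0) :
    Function.Injective (gramian G a b) := by
  refine (injective_iff_map_eq_zero _).2 fun z hz => h z fun s hs v => ?_
  have hnorm : ∫ s in Icc a b, ‖(G s).adjoint z‖ ^ 2 = 0 := by
    rw [← inner_gramian_apply_self hG, hz, inner_zero_right]
  have hzero : (G s).adjoint z = 0 := by
    simpa using eqOn_zero_of_setIntegral_Icc_eq_zero hab
      ((hG.adjoint.clm_apply continuousOn_const).norm.pow 2) (fun _ _ => sq_nonneg _) hnorm hs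
  rw [← ContinuousLinearMap.adjoint_inner_left, hzero, inner_zero_left]

end Gramian

theorem surjective_setIntegral_apply_iff {E F : Type*} [NormedAddCommGroup E]
    [InnerProductSpace ℝ E] [CompleteSpace E] [NormedAddCommGroup F] [InnerProductSpace ℝ F]
    [FiniteDimensional ℝ F] {G : ℝ → E →L[ℝ] F} {a b : ℝ} (hG : ContinuousOn G (Icc a b))
    (hab : a < b) :
    Function.Surjective (fun u : Lp E 2 (volume.restrict (Icc a b)) => ∫ s in Icc a b, G s (u s))
      ↔ ∀ z, (∀ s ∈ Icc a b, ∀ v, ⟪z, G s v⟫ = 0) → z = 0 := by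
  have := FiniteDimensional.complete ℝ F
  refine ⟨fun hL z => eq_zero_of_surjective_setIntegral_apply hL, fun h y => ?_⟩
  have hsurj : Function.Surjective (gramian G a b : F →ₗ[ℝ] F) :=
    LinearMap.injective_iff_surjective.1 (gramian_injective hG hab h)
  obtain ⟨z, rfl⟩ := hsurj y
  exact gramian_apply_mem_range hG z

section Controllability

variable {m p : Type*} [Fintype m] [Fintype p] [DecidableEq p]

theorem Matrix.forall_inner_toEuclideanLin_eq_zero_iff (M : Matrix m p ℝ)
    (z : EuclideanSpace ℝ m) : (∀ v, ⟪z, toEuclideanLin M v⟫ = 0) ↔ ofLp z ᵥ* M = 0 := by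
  have key (v : EuclideanSpace ℝ p) : ⟪z, toEuclideanLin M v⟫ = (ofLp z ᵥ* M) ⬝ᵥ ofLp v := by
    rw [EuclideanSpace.inner_eq_star_dotProduct, dotProduct_comm, ← dotProduct_mulVec]
    rfl
  simp_rw [key, ← dotProduct_eq_zero_iff]
  exact ⟨fun h w => h (toLp 2 w), fun h v => h _⟩

variable [DecidableEq m]

theorem Matrix.continuous_toEuclideanLin_exp_smul_mul (A : Matrix m m ℝ) (B : Matrix m p ℝ) :
    Continuous fun s : ℝ =>
      (toEuclideanLin (NormedSpace.exp (s • A) * B)).toContinuousLinearMap :=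
  ((toEuclideanLin (𝕜 := ℝ) (m := m) (n := p)).trans LinearMap.toContinuousLinearMap
    ).toLinearMap.continuous_of_finiteDimensional.comp
      ((continuous_exp_smul A).matrix_mul continuous_const)

theorem Matrix.surjective_setIntegral_exp_smul_mul_apply_iff (A : Matrix m m ℝ) (B : Matrix m p ℝ) {t : ℝ}
    (ht : 0 < t) :
    Function.Surjective (fun u : Lp (EuclideanSpace ℝ p) 2 (volume.restrict (Icc 0 t)) =>
        ∫ s in Icc 0 t, toEuclideanLin (NormedSpace.exp (s • A) * B) (u s)) ↔
      ∀ x : m → ℝ, (∀ i < Fintype.card m, x ᵥ* (A ^ i * B) = 0) → x = 0 := by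
  refine (surjective_setIntegral_apply_iff
    (continuous_toEuclideanLin_exp_smul_mul A B).continuousOn ht).trans ?_
  simp only [LinearMap.coe_toContinuousLinearMap', forall_inner_toEuclideanLin_eq_zero_iff,
    vecMul_exp_smul_mul_eq_zero_iff _ _ _ ht]
  exact ⟨fun h x hx => congrArg ofLp (h (toLp 2 x) hx), fun h z hz => by simpa using h _ hz⟩

end Controllability

/-- The Kalman rank condition holds iff for every `t > 0` the control-to-state map
`L_t : L²([0,t]; ℝ^d) → ℝ^n`, `L_t u = ∫₀ᵗ e^{sA} B u(s) ds`, is surjective. -/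
theorem rank_condition_iff_controllability
    (n d : ℕ) (A : Matrix (Fin n) (Fin n) ℝ) (B : Matrix (Fin n) (Fin d) ℝ) :
    (Matrix.of fun (i : Fin n) (jk : Fin n × Fin d) =>
        (A ^ (jk.1 : ℕ) * B) i jk.2).rank = n ↔
      ∀ t : ℝ, 0 < t →
        Function.Surjective
          (fun u : Lp (EuclideanSpace ℝ (Fin d)) 2 (volume.restrict (Set.Icc 0 t)) =>
            ∫ s in Set.Icc (0:ℝ) t,
              Matrix.toEuclideanLin (NormedSpace.exp (s • A) * B) (u s)) := by
  have hL (t : ℝ) (ht : 0 < t) := surjective_setIntegral_exp_smul_mul_apply_iff A B ht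
  simp only [Fintype.card_fin] at hL
  change (kalman A B).rank = n ↔ _
  rw [rank_kalman_eq_iff]
  exact ⟨fun h t ht => (hL t ht).2 h, fun h => (hL 1 one_pos).1 (h 1 one_pos)⟩
end

section
/- Let A be a real n×n matrix and B a real n×d matrix. The rank condition Rank[B, AB, ..., A^{n-1}B] = n holds if and only if for every t > 0 there exists C_t > 0 such that ∫₀ᵗ |B* e^{s A*} u|² ds ≥ C_t |u|² for all u ∈ ℝ^n. -/
/-!
If a nonzero `u` satisfies `B* (A*)^j u = 0` for all `j < n`, then by Cayley–Hamilton the same holds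
for every power, hence for the exponential series, so `B* e^{sA*} u ≡ 0` and no observability
inequality can hold. Conversely, if `B* e^{sA*} u` vanishes on `[0, t]`, so do all its derivatives,
which at `s = 0` are `B* (A*)^k u`; under the rank condition this forces `u = 0`. Hence the energy
`u ↦ ∫₀ᵗ |B* e^{sA*} u|² ds` is positive on the unit sphere, and being continuous and homogeneous of
degree two it is bounded below by `C_t |u|²` with `C_t` its minimum on the sphere.
The rank condition itself says that the transposed Kalman matrix is injective.
-/

open MeasureTheory Matrix intervalIntegral Set

theorem eqOn_zero_of_hasDerivAt_succ {E : Type*} [NormedAddCommGroup E] [NormedSpace ℝ E]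
    {w : ℕ → ℝ → E} {a b : ℝ} (hab : a < b) (hw : ∀ k s, HasDerivAt (w k) (w (k + 1) s) s)
    (h₀ : EqOn (w 0) 0 (Icc a b)) (k : ℕ) : EqOn (w k) 0 (Icc a b) := by
  induction k with
  | zero => exact h₀
  | succ k ih =>
    have hIoo : EqOn (w (k + 1)) 0 (Ioo a b) := fun s hs =>
      (hw k s).unique <| (hasDerivAt_const s (0 : E)).congr_of_eventuallyEq <|
        Filter.eventually_of_mem (Ioo_mem_nhds hs.1 hs.2) fun x hx => ih (Ioo_subset_Icc_self hx)
    have hcont : Continuous (w (k + 1)) :=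
      continuous_iff_continuousAt.2 fun s => (hw (k + 1) s).continuousAt
    simpa [closure_Ioo hab.ne] using hIoo.closure hcont continuous_const

theorem exists_pos_mul_norm_sq_le {E : Type*} [NormedAddCommGroup E] [NormedSpace ℝ E]
    [FiniteDimensional ℝ E] {F : E → ℝ} (hF : Continuous F)
    (hsmul : ∀ (c : ℝ) u, F (c • u) = c ^ 2 * F u) (hpos : ∀ u, u ≠ 0 → 0 < F u) :
    ∃ C > 0, ∀ u, C * ‖u‖ ^ 2 ≤ F u := by
  obtain ⟨C, hC, hCle⟩ : ∃ C > 0, ∀ v ∈ Metric.sphere (0 : E) 1, C ≤ F v := by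
    rcases (Metric.sphere (0 : E) 1).eq_empty_or_nonempty with h | h
    · exact ⟨1, one_pos, by simp [h]⟩
    · obtain ⟨w, hw, hmin⟩ := (isCompact_sphere 0 1).exists_isMinOn h hF.continuousOn
      exact ⟨F w, hpos w (ne_zero_of_mem_unit_sphere ⟨w, hw⟩), hmin⟩
  refine ⟨C, hC, fun u => ?_⟩
  rcases eq_or_ne u 0 with rfl | hu
  · simp [show F 0 = 0 by simpa using hsmul 0 0]
  · have hunit : ‖u‖⁻¹ • u ∈ Metric.sphere (0 : E) 1 := by simp [norm_smul, hu]
    calc C * ‖u‖ ^ 2 ≤ ‖u‖ ^ 2 * F (‖u‖⁻¹ • u) := by rw [mul_comm]; gcongr; exact hCle _ hunit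
      _ = F u := by rw [← hsmul, smul_inv_smul₀ (norm_ne_zero_iff.2 hu)]

theorem Matrix.rank_eq_card_width_iff {ι m K : Type*} [Fintype ι] [Field K] (M : Matrix m ι K) :
    M.rank = Fintype.card ι ↔ ∀ v, M *ᵥ v = 0 → v = 0 := by
  rw [← Matrix.ker_mulVecLin_eq_bot_iff, ← Submodule.finrank_eq_zero, Matrix.rank]
  have := M.mulVecLin.finrank_range_add_finrank_ker
  rw [Module.finrank_fintype_fun_eq_card] at this
  omega

namespace Matrix

variable {ι m : Type*} [Fintype ι] [DecidableEq ι]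

theorem exp_smul_mem_span_pow (A : Matrix ι ι ℝ) (s : ℝ) :
    NormedSpace.exp (s • A) ∈ Submodule.span ℝ ((A ^ ·) '' Iio (Fintype.card ι)) := by
  -- `ℝ[A]` is spanned by the powers below the degree of the characteristic polynomial, and it is
  -- closed (being finite-dimensional), so it contains the exponential series of `s • A`.
  have hspan := Submodule.span_range_natDegree_eq_adjoin A.charpoly_monic A.aeval_self_charpoly
  simp only [Finset.coe_image, Finset.coe_range, A.charpoly_natDegree_eq_dim] at hspan
  rw [hspan, Subalgebra.mem_toSubmodule]
  exact NormedSpace.exp_mem (s := Algebra.adjoin ℝ {A})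
    (Algebra.adjoin ℝ {A}).toSubmodule.closed_of_finiteDimensional
    (Subalgebra.smul_mem _ (Algebra.self_mem_adjoin_singleton ℝ A) s)

theorem continuous_exp_smul_s4 (A : Matrix ι ι ℝ) :
    Continuous fun t : ℝ => NormedSpace.exp (t • A) :=
  open scoped Norms.Operator in
  continuous_iff_continuousAt.2 fun s => (hasDerivAt_exp_smul_const' (𝕂 := ℝ) A s).continuousAt

theorem continuous_toEuclideanLin_mul_exp_smul (A : Matrix ι ι ℝ) (C : Matrix m ι ℝ) :
    Continuous fun p : EuclideanSpace ℝ ι × ℝ =>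
      toEuclideanLin (C * NormedSpace.exp (p.2 • A)) p.1 :=
  (PiLp.continuous_toLp 2 _).comp <|
    (continuous_const.matrix_mul ((continuous_exp_smul_s4 A).comp continuous_snd)).matrix_mulVec
      ((PiLp.continuous_ofLp 2 _).comp continuous_fst)

variable [Fintype m]

theorem hasDerivAt_mul_exp_smul_mulVec (C : Matrix m ι ℝ) (A : Matrix ι ι ℝ) (u : ι → ℝ)
    (s : ℝ) :
    HasDerivAt (fun t : ℝ => (C * NormedSpace.exp (t • A)) *ᵥ u)
      ((C * A * NormedSpace.exp (s • A)) *ᵥ u) s := by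
  -- Matrices carry no canonical norm; any one lets us differentiate `exp`.
  let : NormedRing (Matrix ι ι ℝ) := Matrix.linftyOpNormedRing
  let : NormedAlgebra ℝ (Matrix ι ι ℝ) := Matrix.linftyOpNormedAlgebra
  let L := (((mulVecBilin ℝ ℝ).flip u) ∘ₗ mulLeftLinearMap ι ℝ C).toContinuousLinearMap
  rw [Matrix.mul_assoc]
  exact L.hasFDerivAt.comp_hasDerivAt s (hasDerivAt_exp_smul_const' (𝕂 := ℝ) A s)

theorem mul_exp_smul_mulVec_eq_zero_iff (C : Matrix m ι ℝ) (A : Matrix ι ι ℝ) (u : ι → ℝ)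
    {t : ℝ} (ht : 0 < t) :
    (∀ s ∈ Icc 0 t, (C * NormedSpace.exp (s • A)) *ᵥ u = 0) ↔
      ∀ j < Fintype.card ι, (C * A ^ j) *ᵥ u = 0 := by
  constructor
  · intro h j _
    let w (k : ℕ) (s : ℝ) := (C * A ^ k * NormedSpace.exp (s • A)) *ᵥ u
    have hw (k : ℕ) (s : ℝ) : HasDerivAt (w k) (w (k + 1) s) s := by
      simpa only [w, pow_succ, Matrix.mul_assoc] using
        hasDerivAt_mul_exp_smul_mulVec (C * A ^ k) A u s
    have h₀ : EqOn (w 0) 0 (Icc 0 t) := fun s hs => by simpa [w] using h s hs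
    simpa [w] using eqOn_zero_of_hasDerivAt_succ ht hw h₀ j (left_mem_Icc.2 ht.le)
  · intro h s _
    let L := ((mulVecBilin ℝ ℝ).flip u) ∘ₗ mulLeftLinearMap ι ℝ C
    have hspan : Submodule.span ℝ ((A ^ ·) '' Iio (Fintype.card ι)) ≤ LinearMap.ker L :=
      Submodule.span_le.2 <| by rintro _ ⟨j, hj, rfl⟩; exact h j hj
    exact hspan (exp_smul_mem_span_pow A s)

end Matrix

section Observability

variable {ι m : Type*} [Fintype ι] [DecidableEq ι] [Fintype m]

/-- The quadratic form `⟨W_t u, u⟩` of the observability Gramian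
`W_t = ∫₀ᵗ e^{sAᵀ} Cᵀ C e^{sA} ds`. -/
noncomputable def observabilityEnergy (A : Matrix ι ι ℝ) (C : Matrix m ι ℝ) (t : ℝ)
    (u : EuclideanSpace ℝ ι) : ℝ :=
  ∫ s in (0 : ℝ)..t, ‖toEuclideanLin (C * NormedSpace.exp (s • A)) u‖ ^ 2

variable (A : Matrix ι ι ℝ) (C : Matrix m ι ℝ) (t : ℝ)

theorem continuous_observabilityEnergy : Continuous (observabilityEnergy A C t) :=
  continuous_parametric_intervalIntegral_of_continuous'
    ((continuous_toEuclideanLin_mul_exp_smul A C).norm.pow 2) 0 t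

theorem observabilityEnergy_smul (c : ℝ) (u : EuclideanSpace ℝ ι) :
    observabilityEnergy A C t (c • u) = c ^ 2 * observabilityEnergy A C t u := by
  simp only [observabilityEnergy, map_smul, norm_smul, mul_pow, Real.norm_eq_abs, sq_abs,
    intervalIntegral.integral_const_mul]

theorem observabilityEnergy_pos_iff (ht : 0 < t) (u : EuclideanSpace ℝ ι) :
    0 < observabilityEnergy A C t u ↔
      ∃ j < Fintype.card ι, (C * A ^ j) *ᵥ WithLp.ofLp u ≠ 0 := by
  have hcont : Continuous fun s : ℝ => ‖toEuclideanLin (C * NormedSpace.exp (s • A)) u‖ ^ 2 :=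
    ((continuous_toEuclideanLin_mul_exp_smul A C).comp
      (continuous_const.prodMk continuous_id)).norm.pow 2
  constructor
  · intro hpos
    by_contra! h
    have hzero := (mul_exp_smul_mulVec_eq_zero_iff C A _ ht).2 h
    have : observabilityEnergy A C t u = ∫ _ in (0 : ℝ)..t, (0 : ℝ) :=
      integral_congr fun s hs => by
        rw [uIcc_of_le ht.le] at hs
        simp [toLpLin_apply, hzero s hs]
    exact hpos.ne' (this.trans intervalIntegral.integral_zero)
  · rintro ⟨j, hj, hne⟩
    obtain ⟨s, hs, hs0⟩ : ∃ s ∈ Icc 0 t, (C * NormedSpace.exp (s • A)) *ᵥ WithLp.ofLp u ≠ 0 := by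
      by_contra! h
      exact hne ((mul_exp_smul_mulVec_eq_zero_iff C A _ ht).1 h j hj)
    refine integral_pos ht hcont.continuousOn (fun _ _ => by positivity) ⟨s, hs, ?_⟩
    exact pow_pos (norm_pos_iff.2 (by simpa [toLpLin_apply] using hs0)) 2

end Observability

section Kalman

variable {R m : Type*} {n : ℕ}

def kalmanMatrix [Semiring R] (A : Matrix (Fin n) (Fin n) R) (B : Matrix (Fin n) m R) :
    Matrix (Fin n) (Fin n × m) R :=
  of fun i jk => (A ^ (jk.1 : ℕ) * B) i jk.2

theorem kalmanMatrix_transpose_mulVec_eq_zero_iff [CommSemiring R] (A : Matrix (Fin n) (Fin n) R)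
    (B : Matrix (Fin n) m R) (u : Fin n → R) :
    (kalmanMatrix A B)ᵀ *ᵥ u = 0 ↔ ∀ j < n, (Bᵀ * Aᵀ ^ j) *ᵥ u = 0 := by
  simp only [← transpose_pow, ← transpose_mul]
  constructor
  · intro h j hj
    ext k
    exact congrFun h (⟨j, hj⟩, k)
  · intro h
    ext ⟨j, k⟩
    exact congrFun (h j j.isLt) k

theorem rank_kalmanMatrix_eq_iff [Field R] [Fintype m] (A : Matrix (Fin n) (Fin n) R)
    (B : Matrix (Fin n) m R) :
    (kalmanMatrix A B).rank = n ↔ ∀ u, (∀ j < n, (Bᵀ * Aᵀ ^ j) *ᵥ u = 0) → u = 0 := by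
  have h := (kalmanMatrix A B)ᵀ.rank_eq_card_width_iff
  rw [rank_transpose, Fintype.card_fin] at h
  simp_rw [h, kalmanMatrix_transpose_mulVec_eq_zero_iff]

end Kalman

/-- The Kalman rank condition holds iff for every `t > 0` there is `C_t > 0` with
`∫₀ᵗ ‖B* e^{sA*} u‖² ds ≥ C_t ‖u‖²` for all `u ∈ ℝⁿ`. -/
theorem rank_condition_iff_observability_inequality
    (n d : ℕ) (A : Matrix (Fin n) (Fin n) ℝ) (B : Matrix (Fin n) (Fin d) ℝ) :
    (Matrix.of fun (i : Fin n) (jk : Fin n × Fin d) =>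
        (A ^ (jk.1 : ℕ) * B) i jk.2).rank = n ↔
      ∀ t : ℝ, 0 < t → ∃ C : ℝ, 0 < C ∧
        ∀ u : EuclideanSpace ℝ (Fin n),
          C * ‖u‖ ^ 2 ≤
            ∫ s in (0:ℝ)..t,
              ‖Matrix.toEuclideanLin (Bᵀ * NormedSpace.exp (s • Aᵀ)) u‖ ^ 2 := by
  change (kalmanMatrix A B).rank = n ↔
    ∀ t : ℝ, 0 < t → ∃ C : ℝ, 0 < C ∧ ∀ u, C * ‖u‖ ^ 2 ≤ observabilityEnergy Aᵀ Bᵀ t u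
  have hpos (t : ℝ) (ht : 0 < t) (u : EuclideanSpace ℝ (Fin n)) :=
    observabilityEnergy_pos_iff Aᵀ Bᵀ t ht u
  simp only [Fintype.card_fin] at hpos
  rw [rank_kalmanMatrix_eq_iff]
  constructor
  · intro hunobs t ht
    refine exists_pos_mul_norm_sq_le (continuous_observabilityEnergy Aᵀ Bᵀ t)
      (observabilityEnergy_smul Aᵀ Bᵀ t) fun u hu => (hpos t ht u).2 ?_
    by_contra! h
    exact hu ((WithLp.ofLp_eq_zero 2).1 (hunobs _ h))
  · intro hobs u hu
    obtain ⟨C, hC, hle⟩ := hobs 1 one_pos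
    have hzero : observabilityEnergy Aᵀ Bᵀ 1 (WithLp.toLp 2 u) ≤ 0 := not_lt.1 fun h => by
      obtain ⟨j, hj, hne⟩ := (hpos 1 one_pos _).1 h
      exact hne (hu j hj)
    simpa using nonpos_of_mul_nonpos_right ((hle _).trans hzero) hC
end

section
/- Let A be a real n×n matrix and B a real n×d matrix satisfying the rank condition Rank[B, AB, ..., A^{n-1}B] = n. Then there exists T₀ > 0 (depending only on n and the eigenvalues of A) such that for every integer m ≥ n+1 and all times 0 ≤ s₁ < s₂ < ... < s_m ≤ T₀, the linear map l : ℝ^{dm} → ℝ^n defined by l(y₁,...,y_m) = Σ_{j=1}^m e^{s_j A} B y_j is surjective. -/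
/-!
If `x` is orthogonal to the range, then `t ↦ xᵀ e^{tA} B` vanishes at the `m > n` times `sⱼ`,
so by Rolle's theorem every column of its `k`-th derivative `xᵀ e^{tA} Aᵏ B` (`k < n`) vanishes
somewhere in `[0, T₀]`. By the rank condition the columns of the `Aᵏ B` span `ℝⁿ`; spanning
families form an open set, so for `T₀` small the columns of the `e^{ξ A} Aᵏ B` still span `ℝⁿ`,
even with a different `ξ ∈ [0, T₀]` for each column. Hence `x = 0`.
-/

open Matrix

-- Any algebra norm on matrices would do: it only supplies the calculus of `NormedSpace.exp`.
attribute [local instance] Matrix.linftyOpNormedRing Matrix.linftyOpNormedAlgebra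

theorem exists_mem_Icc_eq_zero_of_hasDerivAt_succ (g : ℕ → ℝ → ℝ)
    (hg : ∀ j t, HasDerivAt (g j) (g (j + 1) t) t) (k : ℕ) (s : Fin (k + 1) → ℝ)
    (hs : StrictMono s) (hzero : ∀ i, g 0 (s i) = 0) :
    ∃ ξ ∈ Set.Icc (s 0) (s (Fin.last k)), g k ξ = 0 := by
  induction k generalizing g with
  | zero => exact ⟨s 0, ⟨le_rfl, le_rfl⟩, hzero 0⟩
  | succ k ih =>
    have hrolle : ∀ i : Fin (k + 1), ∃ c ∈ Set.Ioo (s i.castSucc) (s i.succ), g 1 c = 0 :=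
      fun i => exists_hasDerivAt_eq_zero (hs i.castSucc_lt_succ)
        (fun t _ => (hg 0 t).continuousAt.continuousWithinAt)
        ((hzero _).trans (hzero _).symm) (fun t _ => hg 0 t)
    choose t ht hgt using hrolle
    have hts : StrictMono t := Fin.strictMono_iff_lt_succ.2 fun i =>
      (ht i.castSucc).2.trans (Fin.succ_castSucc i ▸ (ht i.succ).1)
    obtain ⟨ξ, hξ, hgξ⟩ := ih (fun j => g (j + 1)) (fun j t => hg (j + 1) t) t hts hgt
    exact ⟨ξ, ⟨(ht 0).1.le.trans hξ.1, hξ.2.trans (ht (Fin.last k)).2.le⟩, hgξ⟩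

theorem hasDerivAt_dotProduct_exp_smul_mulVec {ι : Type*} [Fintype ι] [DecidableEq ι]
    (A : Matrix ι ι ℝ) (v u : ι → ℝ) (t : ℝ) :
    HasDerivAt (fun t : ℝ => v ⬝ᵥ (NormedSpace.exp (t • A) *ᵥ u))
      (v ⬝ᵥ (NormedSpace.exp (t • A) *ᵥ (A *ᵥ u))) t := by
  let φ : Matrix ι ι ℝ →ₗ[ℝ] ℝ :=
    { toFun := fun M => v ⬝ᵥ (M *ᵥ u)
      map_add' := fun M N => by simp [add_mulVec, dotProduct_add]
      map_smul' := fun c M => by simp [smul_mulVec, dotProduct_smul] }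
  have h := (LinearMap.toContinuousLinearMap φ).hasFDerivAt.comp_hasDerivAt t
    (hasDerivAt_exp_smul_const A t)
  exact h.congr_deriv (by rw [mulVec_mulVec]; rfl)

theorem isOpen_setOf_span_eq_top {𝕜 E ι : Type*} [NontriviallyNormedField 𝕜] [CompleteSpace 𝕜]
    [NormedAddCommGroup E] [NormedSpace 𝕜 E] [FiniteDimensional 𝕜 E] [Finite ι] :
    IsOpen {v : ι → E | Submodule.span 𝕜 (Set.range v) = ⊤} := by
  refine isOpen_iff_mem_nhds.2 fun v hv => ?_
  obtain ⟨κ, a, ha, hspan, hli⟩ := exists_linearIndependent' 𝕜 v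
  have : Fintype ι := Fintype.ofFinite ι
  have : Fintype κ := Fintype.ofInjective a ha
  have hcard : Fintype.card κ = Module.finrank 𝕜 E := by
    rw [← finrank_span_eq_card hli, hspan, hv, finrank_top]
  have hcomp : Continuous fun u : ι → E => u ∘ a := by fun_prop
  filter_upwards [hcomp.continuousAt.eventually hli.eventually] with u hu
  exact eq_top_mono (Submodule.span_mono (Set.range_comp_subset_range a u))
    (hu.span_eq_top_of_card_eq_finrank' hcard)

theorem Matrix.span_range_col_eq_top_of_rank_eq {m n R : Type*} [Fintype m] [Fintype n]
    [Field R] (M : Matrix m n R) (h : M.rank = Fintype.card m) :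
    Submodule.span R (Set.range M.col) = ⊤ :=
  Submodule.eq_top_of_finrank_eq <| by
    rw [← rank_eq_finrank_span_cols, h, Module.finrank_fintype_fun_eq_card]

theorem Matrix.eq_zero_of_dotProduct_eq_zero_of_span_eq_top {ι κ R : Type*} [Fintype ι]
    [CommRing R] {f : κ → ι → R} (hf : Submodule.span R (Set.range f) = ⊤) {v : ι → R}
    (hv : ∀ k, v ⬝ᵥ f k = 0) : v = 0 := by
  have hle : Submodule.span R (Set.range f) ≤ LinearMap.ker (dotProductBilin R R v) :=
    Submodule.span_le.2 <| Set.range_subset_iff.2 fun k => by simpa using hv k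
  exact dotProduct_eq_zero v fun w => by simpa using hle (hf ▸ Submodule.mem_top : w ∈ _)

theorem exists_pos_forall_abs_lt_span_exp_smul_mulVec_eq_top {ι κ : Type*} [Fintype ι]
    [DecidableEq ι] [Fintype κ] (A : Matrix ι ι ℝ) {w : κ → ι → ℝ}
    (hw : Submodule.span ℝ (Set.range w) = ⊤) :
    ∃ δ > 0, ∀ ξ : κ → ℝ, (∀ p, |ξ p| < δ) →
      Submodule.span ℝ (Set.range fun p => NormedSpace.exp (ξ p • A) *ᵥ w p) = ⊤ := by
  have hcont : Continuous fun (ξ : κ → ℝ) p => NormedSpace.exp (ξ p • A) *ᵥ w p :=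
    continuous_pi fun p => (NormedSpace.exp_continuous.comp
      ((continuous_apply p).smul continuous_const)).matrix_mulVec continuous_const
  have hopen := (isOpen_setOf_span_eq_top (𝕜 := ℝ)).preimage hcont
  obtain ⟨δ, hδ, hball⟩ := Metric.isOpen_iff.1 hopen (0 : κ → ℝ) (by simpa using hw)
  refine ⟨δ, hδ, fun ξ hξ => hball ?_⟩
  simpa [pi_norm_lt_iff hδ] using hξ

theorem exists_dotProduct_exp_smul_pow_mulVec_eq_zero {ι : Type*} [Fintype ι] [DecidableEq ι]
    {m : ℕ} (A : Matrix ι ι ℝ) (v u : ι → ℝ) {s : Fin m → ℝ} (hs : StrictMono s)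
    (hv : ∀ j, v ⬝ᵥ (NormedSpace.exp (s j • A) *ᵥ u) = 0) (k : ℕ) (hk : k < m) :
    ∃ ξ ∈ Set.Icc (s ⟨0, by omega⟩) (s ⟨k, hk⟩),
      v ⬝ᵥ (NormedSpace.exp (ξ • A) *ᵥ (A ^ k *ᵥ u)) = 0 := by
  refine exists_mem_Icc_eq_zero_of_hasDerivAt_succ
    (fun j t => v ⬝ᵥ (NormedSpace.exp (t • A) *ᵥ (A ^ j *ᵥ u))) (fun j t => ?_) k
    (s ∘ Fin.castLE hk) (hs.comp (Fin.strictMono_castLE hk)) (fun i => ?_)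
  · simpa only [mulVec_mulVec, ← pow_succ'] using
      hasDerivAt_dotProduct_exp_smul_mulVec A v (A ^ j *ᵥ u) t
  · simpa using hv _

theorem surjective_sum_apply_of_inner_eq_zero {𝕜 ι V W : Type*} [RCLike 𝕜] [Fintype ι]
    [DecidableEq ι] [AddCommGroup V] [Module 𝕜 V] [NormedAddCommGroup W] [InnerProductSpace 𝕜 W]
    [FiniteDimensional 𝕜 W] (f : ι → V →ₗ[𝕜] W)
    (h : ∀ x : W, (∀ j y, inner 𝕜 (f j y) x = 0) → x = 0) :
    Function.Surjective fun y : ι → V => ∑ j, f j (y j) := by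
  let L : (ι → V) →ₗ[𝕜] W := ∑ j, (f j).comp (LinearMap.proj j)
  have hL (j : ι) (y : V) : L (Pi.single j y) = f j y := by
    simp [L, LinearMap.sum_apply, Pi.single_apply, apply_ite]
  have hrange : LinearMap.range L = ⊤ := by
    refine Submodule.orthogonal_eq_bot_iff.1 <| (Submodule.eq_bot_iff _).2 fun x hx => h x ?_
    exact fun j y => (Submodule.mem_orthogonal _ _).1 hx _ (hL j y ▸ LinearMap.mem_range_self L _)
  convert LinearMap.range_eq_top.1 hrange
  simp [L, LinearMap.sum_apply]

/-- Under the Kalman rank condition there is `T₀ > 0` such that for every `m ≥ n+1`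
and all times `0 ≤ s₁ < ⋯ < s_m ≤ T₀` the map
`(y₁,…,y_m) ↦ ∑ⱼ e^{sⱼA} B yⱼ` from `ℝ^{dm}` to `ℝⁿ` is surjective. -/
theorem surjectivity_of_sum_exponential_maps
    (n d : ℕ) (A : Matrix (Fin n) (Fin n) ℝ) (B : Matrix (Fin n) (Fin d) ℝ)
    (hrank : (Matrix.of fun (i : Fin n) (jk : Fin n × Fin d) =>
        (A ^ (jk.1 : ℕ) * B) i jk.2).rank = n) :
    ∃ T₀ : ℝ, 0 < T₀ ∧
      ∀ m : ℕ, n + 1 ≤ m → ∀ s : Fin m → ℝ, StrictMono s →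
        (∀ j, s j ∈ Set.Icc (0:ℝ) T₀) →
        Function.Surjective
          (fun y : Fin m → EuclideanSpace ℝ (Fin d) =>
            ∑ j, Matrix.toEuclideanLin (NormedSpace.exp (s j • A) * B) (y j)) := by
  obtain ⟨δ, hδ, hspan⟩ := exists_pos_forall_abs_lt_span_exp_smul_mulVec_eq_top A
    (span_range_col_eq_top_of_rank_eq _ (by simpa using hrank))
  refine ⟨δ / 2, half_pos hδ, fun m hm s hs hsT => ?_⟩
  refine surjective_sum_apply_of_inner_eq_zero _ fun x hx => ?_
  have hv (c : Fin d) (j : Fin m) :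
      x.ofLp ⬝ᵥ (NormedSpace.exp (s j • A) *ᵥ (B *ᵥ Pi.single c 1)) = 0 := by
    simpa [EuclideanSpace.inner_eq_star_dotProduct, dotProduct_comm, mulVec_mulVec]
      using hx j (EuclideanSpace.single c 1)
  choose ξ hξ hξv using fun p : Fin n × Fin d =>
    exists_dotProduct_exp_smul_pow_mulVec_eq_zero A x.ofLp _ hs (hv p.2) p.1 (by omega)
  have hξδ (p : Fin n × Fin d) : |ξ p| < δ :=
    abs_lt.2 ⟨by linarith [(hsT _).1.trans (hξ p).1], by linarith [(hξ p).2.trans (hsT _).2]⟩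
  have hx0 : x.ofLp = 0 := eq_zero_of_dotProduct_eq_zero_of_span_eq_top (hspan ξ hξδ) fun p => by
    have h := hξv p
    rwa [mulVec_mulVec (Pi.single p.2 1) (A ^ (p.1 : ℕ)) B, mulVec_single_one] at h
  exact (WithLp.ofLp_eq_zero 2).1 hx0
end

section
/- A nontrivial quasi-polynomial y(t) = Σ_{j=1}^k Σ_{r=0}^{n-1} c_{rj} e^{λ_j t} t^r, with distinct complex numbers λ₁,...,λ_k (k ≤ n) and complex coefficients c_{rj} not all zero, has at most finitely many zeros on any compact interval; in particular, there exists T₀ > 0 depending only on n and λ₁,...,λ_k such that every such nontrivial quasi-polynomial has at most n·k zeros on [−T₀, T₀]. -/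
/-!
Write `y(t) = ∑ⱼ pⱼ(t) e^{λⱼ t}` with `deg pⱼ < n`. Its first `n k` derivatives at `0` determine
the coefficients: `(d/dt - λ_k)^n` annihilates the last term but is injective on the others, so
induction on `k` shows that `c ↦ (y(0), …, y^{(nk-1)}(0))` is an injective linear map, hence
`‖c‖ ≤ K ‖(y^{(i)}(0))ᵢ‖`. If `y` had more than `n k` zeros in `[-T, T]`, Rolle's theorem applied
to `Re y` and `Im y` would give each `y^{(i)}`, `i < n k`, real and imaginary parts vanishing
somewhere in `[-T, T]`, so `|y^{(i)}(0)| ≤ 4 T sup |y^{(i+1)}| ≤ 4 T M ‖c‖`; this contradicts the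
previous bound once `4 K M T < 1`. Finiteness on an arbitrary compact interval comes from
analyticity: infinitely many zeros force `y ≡ 0`, so all derivatives vanish at `0` and `c = 0`.
-/

open Set Polynomial

theorem LinearMap.apply_aeval_eq_zero {R V W : Type*} [CommSemiring R] [AddCommMonoid V]
    [Module R V] [AddCommMonoid W] [Module R W] (φ : V →ₗ[R] W) (D : Module.End R V) {v : V}
    {m : ℕ} (h : ∀ i < m, φ ((D ^ i) v) = 0) {q : R[X]} (hq : q.natDegree < m) :
    φ (aeval D q v) = 0 := by
  rw [aeval_eq_sum_range, LinearMap.sum_apply, map_sum]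
  refine Finset.sum_eq_zero fun i hi => ?_
  rw [LinearMap.smul_apply, map_smul, h i (by simp at hi; omega), smul_zero]

theorem Polynomial.eq_zero_of_eval_zero_iterate_derivative {R : Type*} [CommRing R] [IsDomain R]
    [CharZero R] {p : R[X]} {n : ℕ} (hp : p.degree < n)
    (h : ∀ i < n, (derivative^[i] p).eval 0 = 0) : p = 0 := by
  ext m
  rw [coeff_zero]
  rcases lt_or_ge m n with hm | hm
  · have := h m hm
    rwa [← coeff_zero_eq_eval_zero, coeff_iterate_derivative, zero_add,
      Nat.descFactorial_self, nsmul_eq_mul, mul_eq_zero,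
      or_iff_right (by exact_mod_cast m.factorial_ne_zero)] at this
  · exact coeff_eq_zero_of_degree_lt (hp.trans_le (by exact_mod_cast hm))

theorem exists_finset_deriv_eq_zero_of_finset_eq_zero {f f' : ℝ → ℝ}
    (hf : ∀ x, HasDerivAt f (f' x) x) {a b : ℝ} {S : Finset ℝ}
    (hS : ∀ x ∈ S, x ∈ Icc a b ∧ f x = 0) :
    ∃ Z : Finset ℝ, (∀ z ∈ Z, z ∈ Icc a b ∧ f' z = 0) ∧ S.card ≤ Z.card + 1 := by
  induction S using Finset.induction_on_max generalizing b with
  | empty => exact ⟨∅, by simp, by simp⟩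
  | insert c s hlt ih =>
    rcases s.eq_empty_or_nonempty with rfl | hne
    · exact ⟨∅, by simp, by simp⟩
    set m := s.max' hne
    have hmS := hS m (Finset.mem_insert_of_mem (s.max'_mem hne))
    have hcS := hS c (Finset.mem_insert_self c s)
    obtain ⟨Z, hZ, hcard⟩ := ih (b := m) fun x hx =>
      ⟨⟨(hS x (Finset.mem_insert_of_mem hx)).1.1, s.le_max' x hx⟩,
        (hS x (Finset.mem_insert_of_mem hx)).2⟩
    obtain ⟨z, hz, hz0⟩ := exists_hasDerivAt_eq_zero (hlt m (s.max'_mem hne))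
      (continuous_iff_continuousAt.2 fun x => (hf x).continuousAt).continuousOn
      (by rw [hmS.2, hcS.2]) fun x _ => hf x
    refine ⟨insert z Z, ?_, ?_⟩
    · simp only [Finset.mem_insert, forall_eq_or_imp]
      exact ⟨⟨⟨hmS.1.1.trans hz.1.le, hz.2.le.trans hcS.1.2⟩, hz0⟩,
        fun y hy => ⟨⟨(hZ y hy).1.1, (hZ y hy).1.2.trans hmS.1.2⟩, (hZ y hy).2⟩⟩
    · rw [Finset.card_insert_of_notMem fun h => (hlt c h).false,
        Finset.card_insert_of_notMem fun h => (hZ z h).1.2.not_gt hz.1]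
      omega

theorem exists_finset_eq_zero_of_hasDerivAt_tower {G : ℕ → ℝ → ℝ}
    (hG : ∀ l x, HasDerivAt (G l) (G (l + 1) x) x) {a b : ℝ} {S : Finset ℝ}
    (hS : ∀ x ∈ S, x ∈ Icc a b ∧ G 0 x = 0) (l : ℕ) :
    ∃ Z : Finset ℝ, (∀ z ∈ Z, z ∈ Icc a b ∧ G l z = 0) ∧ S.card ≤ Z.card + l := by
  induction l with
  | zero => exact ⟨S, hS, le_rfl⟩
  | succ l ih =>
    obtain ⟨Z, hZ, hcard⟩ := ih
    obtain ⟨Z', hZ', hcard'⟩ := exists_finset_deriv_eq_zero_of_finset_eq_zero (hG l) hZ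
    exact ⟨Z', hZ', by omega⟩

/-- Rolle's theorem, applied to the real and imaginary parts separately, gives each a zero in
`[a, b]`; the mean value inequality then bounds `G l` by the size of `G (l + 1)`. -/
theorem norm_le_of_hasDerivAt_tower {G : ℕ → ℝ → ℂ}
    (hG : ∀ l x, HasDerivAt (G l) (G (l + 1) x) x) {a b M : ℝ} {S : Finset ℝ}
    (hS : ∀ x ∈ S, x ∈ Icc a b ∧ G 0 x = 0) {l : ℕ} (hl : l < S.card)
    (hM : ∀ x ∈ Icc a b, ‖G (l + 1) x‖ ≤ M) {x : ℝ} (hx : x ∈ Icc a b) :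
    ‖G l x‖ ≤ 2 * M * (b - a) := by
  have hpart : ∀ L : ℂ →L[ℝ] ℝ, (∀ z, |L z| ≤ ‖z‖) → |L (G l x)| ≤ M * (b - a) := by
    intro L hL
    have hLG : ∀ l x, HasDerivAt (fun y => L (G l y)) (L (G (l + 1) x)) x :=
      fun l x => L.hasFDerivAt.comp_hasDerivAt x (hG l x)
    obtain ⟨Z, hZ, hcard⟩ := exists_finset_eq_zero_of_hasDerivAt_tower hLG
      (fun y hy => ⟨(hS y hy).1, by rw [(hS y hy).2, map_zero]⟩) l
    obtain ⟨y, hy⟩ := Finset.card_pos.1 (by omega : 0 < Z.card)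
    have hmvt : ‖G l x - G l y‖ ≤ M * ‖x - y‖ :=
      (convex_Icc a b).norm_image_sub_le_of_norm_hasDerivWithin_le
        (fun z _ => (hG l z).hasDerivWithinAt) hM (hZ y hy).1 hx
    have hM0 : 0 ≤ M := (norm_nonneg _).trans (hM x hx)
    calc |L (G l x)| = |L (G l x - G l y)| := by rw [map_sub, (hZ y hy).2, sub_zero]
      _ ≤ M * ‖x - y‖ := (hL _).trans hmvt
      _ ≤ M * (b - a) := mul_le_mul_of_nonneg_left (Real.dist_le_of_mem_Icc hx (hZ y hy).1) hM0
  calc ‖G l x‖ ≤ |(G l x).re| + |(G l x).im| := Complex.norm_le_abs_re_add_abs_im _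
    _ ≤ M * (b - a) + M * (b - a) :=
      add_le_add (hpart Complex.reCLM Complex.abs_re_le_norm)
        (hpart Complex.imCLM Complex.abs_im_le_norm)
    _ = 2 * M * (b - a) := by ring

theorem exists_bound_of_continuous_apply {𝕜 E F X : Type*} [NontriviallyNormedField 𝕜]
    [CompleteSpace 𝕜] [NormedAddCommGroup E] [NormedSpace 𝕜 E] [FiniteDimensional 𝕜 E]
    [NormedAddCommGroup F] [NormedSpace 𝕜 F] [TopologicalSpace X] {L : X → E →ₗ[𝕜] F}
    (hL : ∀ v, Continuous fun x => L x v) {s : Set X} (hs : IsCompact s) :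
    ∃ M, ∀ x ∈ s, ∀ v, ‖L x v‖ ≤ M * ‖v‖ := by
  have hcont : Continuous fun x => LinearMap.toContinuousLinearMap (L x) :=
    continuous_clm_apply.2 hL
  obtain ⟨M, hM⟩ := hs.exists_bound_of_continuousOn hcont.continuousOn
  exact ⟨M, fun x hx v => ((L x).toContinuousLinearMap.le_opNorm v).trans
    (mul_le_mul_of_nonneg_right (hM x hx) (norm_nonneg v))⟩

noncomputable section

namespace QuasiPolynomial

/-- `expDeriv μ p = p' + μ p`, so that `(p(z) e^{μz})' = (expDeriv μ p)(z) e^{μz}`. -/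
def expDeriv (μ : ℂ) : Module.End ℂ ℂ[X] := derivative + algebraMap ℂ _ μ

theorem expDeriv_apply (μ : ℂ) (p : ℂ[X]) : expDeriv μ p = derivative p + μ • p := by
  simp [expDeriv, Module.algebraMap_end_apply]

theorem expDeriv_zero : expDeriv 0 = derivative := by simp [expDeriv]

theorem expDeriv_sub_algebraMap (a μ : ℂ) :
    expDeriv a - algebraMap ℂ _ μ = expDeriv (a - μ) := by
  rw [expDeriv, expDeriv, map_sub, add_sub_assoc]

theorem degree_expDeriv_pow_lt {μ : ℂ} {p : ℂ[X]} {n : ℕ} (hp : p.degree < n) (i : ℕ) :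
    ((expDeriv μ ^ i) p).degree < n := by
  induction i with
  | zero => simpa using hp
  | succ i ih =>
    rw [pow_succ', Module.End.mul_apply, expDeriv_apply]
    exact (degree_add_le _ _).trans_lt <| max_lt (degree_derivative_le.trans_lt ih)
      ((degree_smul_le _ _).trans_lt ih)

theorem expDeriv_injective {μ : ℂ} (hμ : μ ≠ 0) : Function.Injective (expDeriv μ) := by
  rw [← LinearMap.ker_eq_bot, LinearMap.ker_eq_bot']
  intro p hp
  by_contra hp0
  have hlead : (expDeriv μ p).coeff p.natDegree = μ * p.leadingCoeff := by
    rw [expDeriv_apply, coeff_add, coeff_derivative,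
      coeff_eq_zero_of_natDegree_lt (Nat.lt_succ_self _), coeff_smul, smul_eq_mul, zero_mul,
      zero_add, leadingCoeff]
  rw [hp, coeff_zero, eq_comm, mul_eq_zero, leadingCoeff_eq_zero] at hlead
  exact hlead.elim hμ hp0

theorem expDeriv_pow_injective {μ : ℂ} (hμ : μ ≠ 0) (n : ℕ) :
    Function.Injective (expDeriv μ ^ n) := by
  rw [Module.End.coe_pow]
  exact (expDeriv_injective hμ).iterate n

variable {k : ℕ}

/-- Differentiation of `z ↦ ∑ j, p j (z) e^{λⱼ z}`, acting on the coefficient tuple `p`. -/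
def qpDeriv (lam : Fin k → ℂ) : Module.End ℂ (Fin k → ℂ[X]) :=
  LinearMap.pi fun j => expDeriv (lam j) ∘ₗ LinearMap.proj j

theorem qpDeriv_apply (lam : Fin k → ℂ) (p : Fin k → ℂ[X]) (j : Fin k) :
    qpDeriv lam p j = expDeriv (lam j) (p j) := rfl

theorem qpDeriv_pow_apply (lam : Fin k → ℂ) (i : ℕ) (p : Fin k → ℂ[X]) (j : Fin k) :
    (qpDeriv lam ^ i) p j = (expDeriv (lam j) ^ i) (p j) := by
  induction i generalizing p with
  | zero => rfl
  | succ i ih => rw [pow_succ, Module.End.mul_apply, ih, pow_succ, Module.End.mul_apply]; rfl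

theorem degree_qpDeriv_pow_lt {lam : Fin k → ℂ} {p : Fin k → ℂ[X]} {n : ℕ}
    (hp : ∀ j, (p j).degree < n) (i : ℕ) (j : Fin k) : ((qpDeriv lam ^ i) p j).degree < n := by
  rw [qpDeriv_pow_apply]
  exact degree_expDeriv_pow_lt (hp j) i

theorem aeval_qpDeriv_X_sub_C_pow (lam : Fin k → ℂ) (μ : ℂ) (m : ℕ) :
    aeval (qpDeriv lam) ((X - C μ) ^ m) = qpDeriv (fun j => lam j - μ) ^ m := by
  have hsub : qpDeriv lam - algebraMap ℂ _ μ = qpDeriv (fun j => lam j - μ) := by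
    refine LinearMap.ext fun p => funext fun j => ?_
    rw [LinearMap.sub_apply, Pi.sub_apply, Module.algebraMap_end_apply, Pi.smul_apply,
      qpDeriv_apply, qpDeriv_apply, ← expDeriv_sub_algebraMap, LinearMap.sub_apply,
      Module.algebraMap_end_apply]
  rw [map_pow, map_sub, aeval_X, aeval_C, hsub]

/-- The quasi-polynomial `z ↦ ∑ j, p j (z) e^{λⱼ z}`, evaluated at `z`, as a linear form in `p`. -/
def qpEval (lam : Fin k → ℂ) (z : ℂ) : (Fin k → ℂ[X]) →ₗ[ℂ] ℂ :=
  ∑ j, Complex.exp (lam j * z) • leval z ∘ₗ LinearMap.proj j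

@[simp] theorem qpEval_apply (lam : Fin k → ℂ) (z : ℂ) (p : Fin k → ℂ[X]) :
    qpEval lam z p = ∑ j, Complex.exp (lam j * z) * (p j).eval z := by
  simp [qpEval]

theorem qpEval_qpDeriv_pow_of_last_eq_zero (lam : Fin (k + 1) → ℂ) (z : ℂ) (i : ℕ)
    {p : Fin (k + 1) → ℂ[X]} (hp : p (Fin.last k) = 0) :
    qpEval lam z ((qpDeriv lam ^ i) p) =
      qpEval (fun j => lam j.castSucc) z ((qpDeriv (fun j => lam j.castSucc) ^ i)
        (fun j => p j.castSucc)) := by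
  simp only [qpEval_apply, Fin.sum_univ_castSucc, qpDeriv_pow_apply, hp, map_zero, eval_zero,
    mul_zero, add_zero]

/-- `jet lam m z p = (y(z), y'(z), …, y^{(m-1)}(z))` for `y = qpEval lam · p`. -/
def jet (lam : Fin k → ℂ) (m : ℕ) (z : ℂ) : (Fin k → ℂ[X]) →ₗ[ℂ] (Fin m → ℂ) :=
  LinearMap.pi fun i => qpEval lam z ∘ₗ qpDeriv lam ^ (i : ℕ)

theorem jet_apply (lam : Fin k → ℂ) (m : ℕ) (z : ℂ) (p : Fin k → ℂ[X]) (i : Fin m) :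
    jet lam m z p i = qpEval lam z ((qpDeriv lam ^ (i : ℕ)) p) := rfl

theorem jet_eq_zero_iff {lam : Fin k → ℂ} {m : ℕ} {z : ℂ} {p : Fin k → ℂ[X]} :
    jet lam m z p = 0 ↔ ∀ i < m, qpEval lam z ((qpDeriv lam ^ i) p) = 0 := by
  simp [jet, funext_iff, Fin.forall_iff]

theorem qpEval_qpDeriv_pow_sub_pow_eq_zero {lam : Fin k → ℂ} {z μ : ℂ} {p : Fin k → ℂ[X]}
    {m n : ℕ} (h : ∀ i < m + n, qpEval lam z ((qpDeriv lam ^ i) p) = 0) {i : ℕ} (hi : i < m) :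
    qpEval lam z ((qpDeriv lam ^ i) ((qpDeriv (fun j => lam j - μ) ^ n) p)) = 0 := by
  have hdeg : (X ^ i * (X - C μ) ^ n).natDegree < m + n := by
    rw [(monic_X_pow i).natDegree_mul ((monic_X_sub_C μ).pow n), natDegree_X_pow,
      natDegree_pow, natDegree_X_sub_C]
    omega
  have := (qpEval lam z).apply_aeval_eq_zero _ h hdeg
  rwa [map_mul, aeval_qpDeriv_X_sub_C_pow, map_pow, aeval_X, Module.End.mul_apply] at this

theorem eq_zero_of_jet_eq_zero {n : ℕ} : ∀ {k : ℕ} {lam : Fin k → ℂ},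
    Function.Injective lam → ∀ {p : Fin k → ℂ[X]}, (∀ j, (p j).degree < n) →
    jet lam (n * k) 0 p = 0 → p = 0
  | 0, _, _, _, _, _ => Subsingleton.elim _ _
  | k + 1, lam, hlam, p, hdeg, hjet => by
    rw [jet_eq_zero_iff] at hjet
    set μ := lam (Fin.last k)
    set P := (qpDeriv (fun j => lam j - μ) ^ n) p
    have hP_last : P (Fin.last k) = 0 := by
      refine (qpDeriv_pow_apply (fun j => lam j - μ) n p _).trans ?_
      rw [sub_self, expDeriv_zero, Module.End.pow_apply]
      exact iterate_derivative_eq_zero_of_degree_lt (hdeg _)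
    have hP_init : (fun j : Fin k => P j.castSucc) = 0 := by
      refine eq_zero_of_jet_eq_zero (lam := fun j => lam j.castSucc)
        (hlam.comp (Fin.castSucc_injective k)) (fun j => degree_qpDeriv_pow_lt hdeg n _)
        (jet_eq_zero_iff.2 fun i hi => ?_)
      rw [← qpEval_qpDeriv_pow_of_last_eq_zero _ _ _ hP_last]
      exact qpEval_qpDeriv_pow_sub_pow_eq_zero (fun i hi => hjet i (by rwa [Nat.mul_succ])) hi
    have hp_init : ∀ j : Fin k, p j.castSucc = 0 := fun j =>
      (injective_iff_map_eq_zero _).1 (expDeriv_pow_injective (sub_ne_zero.2 fun h =>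
        (Fin.castSucc_lt_last j).ne (hlam h)) n) _
        ((qpDeriv_pow_apply (fun j => lam j - μ) n p _).symm.trans (congrFun hP_init j))
    have hp_last : p (Fin.last k) = 0 := by
      refine eq_zero_of_eval_zero_iterate_derivative (hdeg _) fun i hi => ?_
      have h := qpEval_qpDeriv_pow_sub_pow_eq_zero (μ := μ) (m := 1) (n := i)
        (fun l hl => hjet l (by nlinarith)) zero_lt_one
      rw [pow_zero, Module.End.one_apply, qpEval_apply, Fin.sum_univ_castSucc] at h
      simp only [qpDeriv_pow_apply, hp_init, map_zero, eval_zero, mul_zero,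
        Finset.sum_const_zero, zero_add, Complex.exp_zero, one_mul] at h
      rwa [show lam (Fin.last k) - μ = 0 from sub_self μ, expDeriv_zero,
        Module.End.pow_apply] at h
    funext j
    exact Fin.lastCases hp_last hp_init j

theorem hasDerivAt_qpEval (lam : Fin k → ℂ) (p : Fin k → ℂ[X]) (z : ℂ) :
    HasDerivAt (fun z => qpEval lam z p) (qpEval lam z (qpDeriv lam p)) z := by
  simp only [qpEval_apply, qpDeriv_apply, expDeriv_apply]
  refine HasDerivAt.fun_sum fun j _ => ?_
  refine ((((hasDerivAt_id' z).const_mul (lam j)).cexp).fun_mul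
    ((p j).hasDerivAt z)).congr_deriv ?_
  rw [eval_add, eval_smul, smul_eq_mul]
  ring

theorem hasDerivAt_qpEval_qpDeriv_pow (lam : Fin k → ℂ) (p : Fin k → ℂ[X]) (l : ℕ) (t : ℝ) :
    HasDerivAt (fun t : ℝ => qpEval lam t ((qpDeriv lam ^ l) p))
      (qpEval lam t ((qpDeriv lam ^ (l + 1)) p)) t := by
  rw [pow_succ', Module.End.mul_apply]
  exact (hasDerivAt_qpEval lam _ t).comp_ofReal

theorem continuous_qpEval_ofReal (lam : Fin k → ℂ) (p : Fin k → ℂ[X]) :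
    Continuous fun t : ℝ => qpEval lam t p :=
  continuous_iff_continuousAt.2 fun t => (hasDerivAt_qpEval_qpDeriv_pow lam p 0 t).continuousAt

theorem analyticOnNhd_qpEval_ofReal (lam : Fin k → ℂ) (p : Fin k → ℂ[X]) :
    AnalyticOnNhd ℝ (fun t : ℝ => qpEval lam t p) univ := fun t _ =>
  have hdiff : Differentiable ℂ fun z => qpEval lam z p := fun z =>
    (hasDerivAt_qpEval lam p z).differentiableAt
  ((hdiff.analyticAt t).restrictScalars (𝕜 := ℝ)).comp (Complex.ofRealCLM.analyticAt t)

theorem eq_zero_of_qpEval_eq_zero {lam : Fin k → ℂ} (hlam : Function.Injective lam)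
    {p : Fin k → ℂ[X]} (h : ∀ t : ℝ, qpEval lam t p = 0) : p = 0 := by
  have hderiv : ∀ i, (fun t : ℝ => qpEval lam t ((qpDeriv lam ^ i) p)) = 0 := by
    intro i
    induction i with
    | zero => exact funext h
    | succ i ih =>
      funext t
      exact (hasDerivAt_qpEval_qpDeriv_pow lam p i t).unique
        (by rw [ih]; exact hasDerivAt_const t 0)
  have hdeg : ∀ j, (p j).degree < (Finset.univ.sup fun j => (p j).natDegree) + 1 :=
    fun j => degree_le_natDegree.trans_lt (Nat.cast_lt.2 (Nat.lt_succ_of_le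
      (Finset.le_sup (f := fun j => (p j).natDegree) (Finset.mem_univ j))))
  exact eq_zero_of_jet_eq_zero hlam hdeg (jet_eq_zero_iff.2 fun i _ => congrFun (hderiv i) 0)

theorem finite_setOf_qpEval_eq_zero {lam : Fin k → ℂ} (hlam : Function.Injective lam)
    {p : Fin k → ℂ[X]} (hp : p ≠ 0) (a b : ℝ) :
    {t ∈ Icc a b | qpEval lam t p = 0}.Finite := by
  by_contra hinf
  obtain ⟨x, -, hx⟩ := Set.Infinite.exists_accPt_of_subset_isCompact hinf isCompact_Icc
    (sep_subset _ _)
  refine hp (eq_zero_of_qpEval_eq_zero hlam fun t => ?_)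
  refine (analyticOnNhd_qpEval_ofReal lam p).eqOn_zero_of_preconnected_of_frequently_eq_zero
    isPreconnected_univ (mem_univ x) ?_ (mem_univ t)
  exact (accPt_iff_frequently_nhdsNE.1 hx).mono fun y hy => hy.2

theorem norm_jet_le_of_card_zeros_gt {lam : Fin k → ℂ} {p : Fin k → ℂ[X]} {m : ℕ} {T B : ℝ}
    (hT : 0 ≤ T) (hB : ∀ x ∈ Icc (-T) T, ‖jet lam m x (qpDeriv lam p)‖ ≤ B) {S : Finset ℝ}
    (hS : ∀ x ∈ S, x ∈ Icc (-T) T ∧ qpEval lam x p = 0) (hm : m < S.card) :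
    ‖jet lam m 0 p‖ ≤ 4 * B * T := by
  have h0 : (0 : ℝ) ∈ Icc (-T) T := ⟨by linarith, hT⟩
  have hB0 : 0 ≤ B := (norm_nonneg _).trans (hB 0 h0)
  refine (pi_norm_le_iff_of_nonneg (by positivity)).2 fun i => ?_
  have hGB : ∀ x ∈ Icc (-T) T, ‖qpEval lam x ((qpDeriv lam ^ ((i : ℕ) + 1)) p)‖ ≤ B := by
    intro x hx
    rw [pow_succ, Module.End.mul_apply, ← jet_apply]
    exact (norm_le_pi_norm _ i).trans (hB x hx)
  have := norm_le_of_hasDerivAt_tower (hasDerivAt_qpEval_qpDeriv_pow lam p) hS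
    (i.2.trans hm) hGB h0
  rw [Complex.ofReal_zero] at this
  rw [jet_apply]
  linarith

/-- The quasi-polynomial with coefficient array `c`: its `j`-th polynomial part is
`∑ r, c j r X ^ r`. -/
def ofCoeffs (n : ℕ) : (Fin k → Fin n → ℂ) →ₗ[ℂ] (Fin k → ℂ[X]) :=
  LinearMap.pi fun j =>
    (degreeLT ℂ n).subtype ∘ₗ (degreeLTEquiv ℂ n).symm.toLinearMap ∘ₗ LinearMap.proj j

theorem ofCoeffs_apply {n : ℕ} (c : Fin k → Fin n → ℂ) (j : Fin k) :
    ofCoeffs n c j = ((degreeLTEquiv ℂ n).symm (c j) : ℂ[X]) := rfl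

theorem degree_ofCoeffs_lt {n : ℕ} (c : Fin k → Fin n → ℂ) (j : Fin k) :
    (ofCoeffs n c j).degree < n :=
  mem_degreeLT.1 (Subtype.prop _)

theorem ofCoeffs_injective (n : ℕ) : Function.Injective (ofCoeffs (k := k) n) := fun _ _ h =>
  funext fun j => (degreeLTEquiv ℂ n).symm.injective (Subtype.ext (congrFun h j))

theorem ofCoeffs_eq_zero_iff {n : ℕ} {c : Fin k → Fin n → ℂ} : ofCoeffs n c = 0 ↔ c = 0 :=
  map_eq_zero_iff _ (ofCoeffs_injective n)

theorem qpEval_ofCoeffs {n : ℕ} (lam : Fin k → ℂ) (z : ℂ) (c : Fin k → Fin n → ℂ) :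
    qpEval lam z (ofCoeffs n c) =
      ∑ j, ∑ r, c j r * Complex.exp (lam j * z) * z ^ (r : ℕ) := by
  rw [qpEval_apply]
  refine Finset.sum_congr rfl fun j _ => ?_
  rw [ofCoeffs_apply, eval_eq_sum_degreeLTEquiv (Subtype.prop _), Subtype.coe_eta,
    LinearEquiv.apply_symm_apply, Finset.mul_sum]
  exact Finset.sum_congr rfl fun r _ => by ring

theorem exists_pos_ncard_setOf_qpEval_ofCoeffs_eq_zero_le {lam : Fin k → ℂ}
    (hlam : Function.Injective lam) (n : ℕ) :
    ∃ T₀ : ℝ, 0 < T₀ ∧ ∀ c : Fin k → Fin n → ℂ, c ≠ 0 →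
      {t ∈ Icc (-T₀) T₀ | qpEval lam t (ofCoeffs n c) = 0}.ncard ≤ n * k := by
  have hker : LinearMap.ker (jet lam (n * k) 0 ∘ₗ ofCoeffs n) = ⊥ :=
    LinearMap.ker_eq_bot'.2 fun c hc =>
      ofCoeffs_eq_zero_iff.1 (eq_zero_of_jet_eq_zero hlam (degree_ofCoeffs_lt c) hc)
  obtain ⟨K, -, hK⟩ := (jet lam (n * k) 0 ∘ₗ ofCoeffs n).exists_antilipschitzWith hker
  obtain ⟨M, hM⟩ := exists_bound_of_continuous_apply
    (L := fun x : ℝ => jet lam (n * k) x ∘ₗ qpDeriv lam ∘ₗ ofCoeffs n)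
    (fun c => continuous_pi fun i => continuous_qpEval_ofReal lam _)
    (isCompact_Icc (a := -1) (b := 1))
  set T₀ : ℝ := (4 * K * |M| + 1)⁻¹
  have hT₀ : 0 < T₀ := by positivity
  have hT₀1 : T₀ ≤ 1 := inv_le_one_of_one_le₀ (le_add_of_nonneg_left (by positivity))
  have hsmall : 4 * K * |M| * T₀ < 1 := by
    rw [← div_eq_mul_inv, div_lt_one (by positivity)]
    exact lt_add_one _
  refine ⟨T₀, hT₀, fun c hc => ?_⟩
  by_contra! hcard
  have hfin := finite_setOf_qpEval_eq_zero hlam (ofCoeffs_eq_zero_iff.not.2 hc) (-T₀) T₀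
  have hjet := norm_jet_le_of_card_zeros_gt (S := hfin.toFinset) hT₀.le
    (fun x hx => hM x ⟨by linarith [hx.1], by linarith [hx.2]⟩ c) (by simp)
    (by rwa [← Set.ncard_eq_toFinset_card _ hfin])
  have hcpos : 0 < ‖c‖ := norm_pos_iff.2 hc
  have := calc ‖c‖ ≤ K * ‖jet lam (n * k) 0 (ofCoeffs n c)‖ :=
        ZeroHomClass.bound_of_antilipschitz _ hK c
    _ ≤ K * (4 * (M * ‖c‖) * T₀) := mul_le_mul_of_nonneg_left hjet K.2
    _ ≤ 4 * K * |M| * T₀ * ‖c‖ := by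
        rw [show K * (4 * (M * ‖c‖) * T₀) = 4 * K * M * T₀ * ‖c‖ by ring]
        gcongr
        exact le_abs_self M
    _ < 1 * ‖c‖ := by gcongr
  linarith

end QuasiPolynomial

end

theorem quasiPolynomial_finitely_many_zeros_general
    (n k : ℕ)
    (lam : Fin k → ℂ) (hlam : Function.Injective lam) :
    (∀ c : Fin k → Fin n → ℂ, c ≠ 0 → ∀ a b : ℝ,
      {t ∈ Icc a b |
        ∑ j, ∑ r, c j r * Complex.exp (lam j * t) * (t : ℂ) ^ (r : ℕ) = 0}.Finite) ∧
    ∃ T₀ : ℝ, 0 < T₀ ∧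
      ∀ c : Fin k → Fin n → ℂ, c ≠ 0 →
        {t ∈ Icc (-T₀) T₀ |
          ∑ j, ∑ r, c j r * Complex.exp (lam j * t) * (t : ℂ) ^ (r : ℕ) = 0}.ncard
          ≤ n * k := by
  simp only [← QuasiPolynomial.qpEval_ofCoeffs]
  exact ⟨fun c hc => QuasiPolynomial.finite_setOf_qpEval_eq_zero hlam
      (QuasiPolynomial.ofCoeffs_eq_zero_iff.not.2 hc),
    QuasiPolynomial.exists_pos_ncard_setOf_qpEval_ofCoeffs_eq_zero_le hlam n⟩

/-- A nontrivial quasi-polynomial `y(t) = ∑_{j<k} ∑_{r<n} c_{rj} e^{λⱼt} tʳ`, with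
distinct exponents `λ₁,…,λ_k` (`k ≤ n`) and coefficients not all zero, has finitely
many zeros on every compact interval; moreover there is `T₀ > 0`, depending only on
`n` and the `λⱼ`, such that every such nontrivial quasi-polynomial has at most `n·k`
zeros on `[−T₀, T₀]`. -/
theorem quasiPolynomial_finitely_many_zeros
    (n k : ℕ) (hk0 : 0 < k) (hk : k ≤ n)
    (lam : Fin k → ℂ) (hlam : Function.Injective lam) :
    (∀ c : Fin k → Fin n → ℂ, c ≠ 0 → ∀ a b : ℝ,
      {t ∈ Icc a b |
        ∑ j, ∑ r, c j r * Complex.exp (lam j * t) * (t : ℂ) ^ (r : ℕ) = 0}.Finite) ∧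
    ∃ T₀ : ℝ, 0 < T₀ ∧
      ∀ c : Fin k → Fin n → ℂ, c ≠ 0 →
        {t ∈ Icc (-T₀) T₀ |
          ∑ j, ∑ r, c j r * Complex.exp (lam j * t) * (t : ℂ) ^ (r : ℕ) = 0}.ncard
          ≤ n * k :=
  quasiPolynomial_finitely_many_zeros_general n k lam hlam
end

section
/- Let v ∈ ℝ^n and suppose B* e^{s A*} v = 0 for all s in a set of at least n+1 distinct points in [0, T₀], where every nontrivial quasi-polynomial built from the eigenvalues of A with polynomial degrees less than n has at most n zeros on [0, T₀]. Then the function s ↦ B* e^{s A*} v vanishes identically on [0, T₀], and if additionally the rank condition Rank[B, AB, ..., A^{n-1}B] = n holds, then v = 0. -/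
/-!
Each coordinate of `s ↦ Bᵀ e^{s Aᵀ} v` is a quasi-polynomial: split `v` into generalized
eigenvectors of `Aᵀ`; on the one for `μ` the exponential acts as `e^{μ s}` times a polynomial
of degree `< n` in `s`. Vanishing at `n + 1` points of `[0, T₀]`, this quasi-polynomial is zero
by hypothesis, unless its zero set in `[0, T₀]` is infinite, in which case it vanishes by the
identity theorem for entire functions. Differentiating `Bᵀ e^{s Aᵀ} v ≡ 0` at `s = 0` gives
`Bᵀ (Aᵀ)ᵏ v = 0` for all `k`, so `v` is orthogonal to the columns of the Kalman matrix, which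
span `ℝⁿ` under the rank condition.
-/

open Matrix Set NormedSpace
open scoped Nat

noncomputable def quasiPolynomial {m : ℕ} (Λ : Finset ℂ) (c : ℂ → Fin m → ℂ) (z : ℂ) : ℂ :=
  ∑ lam ∈ Λ, ∑ r, c lam r * Complex.exp (lam * z) * z ^ (r : ℕ)

theorem differentiable_quasiPolynomial {m : ℕ} (Λ : Finset ℂ) (c : ℂ → Fin m → ℂ) :
    Differentiable ℂ (quasiPolynomial Λ c) := by
  unfold quasiPolynomial
  fun_prop

@[simp]
theorem quasiPolynomial_zero {m : ℕ} (Λ : Finset ℂ) :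
    quasiPolynomial Λ (0 : ℂ → Fin m → ℂ) = 0 := by
  ext z
  simp [quasiPolynomial]

theorem AnalyticOnNhd.eq_zero_of_infinite_of_subset_isCompact {𝕜 E : Type*}
    [NontriviallyNormedField 𝕜] [ConnectedSpace 𝕜] [NormedAddCommGroup E] [NormedSpace 𝕜 E]
    {f : 𝕜 → E} (hf : AnalyticOnNhd 𝕜 f univ) {Z K : Set 𝕜} (hZ : Z.Infinite)
    (hK : IsCompact K) (hZK : Z ⊆ K) (hfZ : EqOn f 0 Z) : f = 0 := by
  obtain ⟨z₀, -, hz₀⟩ := hZ.exists_accPt_of_subset_isCompact hK hZK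
  refine hf.eq_of_frequently_eq analyticOnNhd_const (z₀ := z₀) ?_
  rw [accPt_iff_frequently_nhdsNE] at hz₀
  exact hz₀.mono fun z hz => hfZ hz

theorem quasiPolynomial_eq_zero_of_forall_ncard_le {m n : ℕ} {Λ : Finset ℂ} {T₀ : ℝ}
    (hQP : ∀ c : ℂ → Fin m → ℂ, (∀ lam ∉ Λ, c lam = 0) → c ≠ 0 →
      {s ∈ Icc (0:ℝ) T₀ | quasiPolynomial Λ c s = 0}.ncard ≤ n)
    {c : ℂ → Fin m → ℂ} (hc : ∀ lam ∉ Λ, c lam = 0)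
    {s : Fin (n + 1) → ℝ} (hs : Function.Injective s) (hs' : ∀ j, s j ∈ Icc 0 T₀)
    (hzero : ∀ j, quasiPolynomial Λ c (s j) = 0) :
    quasiPolynomial Λ c = 0 := by
  set S := {s ∈ Icc (0:ℝ) T₀ | quasiPolynomial Λ c s = 0}
  have hsS : range s ⊆ S := by
    rintro _ ⟨j, rfl⟩
    exact ⟨hs' j, hzero j⟩
  -- `ncard` of an infinite set is `0`, so an infinite zero set escapes the hypothesis `hQP`.
  rcases S.finite_or_infinite with hfin | hinf
  · have hcard : n < S.ncard := by
      calc n < (range s).ncard := by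
            rw [← image_univ, ncard_image_of_injective _ hs, ncard_univ, Nat.card_fin]; omega
        _ ≤ S.ncard := ncard_le_ncard hsS hfin
    by_contra hne
    have hc0 : c ≠ 0 := by rintro rfl; exact hne (quasiPolynomial_zero Λ)
    exact (hQP c hc hc0).not_gt hcard
  · refine Complex.analyticOnNhd_univ_iff_differentiable.mpr (differentiable_quasiPolynomial Λ c)
      |>.eq_zero_of_infinite_of_subset_isCompact (hinf.image Complex.ofReal_injective.injOn)
        (isCompact_Icc.image Complex.continuous_ofReal) (image_mono (sep_subset _ _)) ?_
    rintro _ ⟨u, hu, rfl⟩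
    exact hu.2

theorem ContinuousLinearMap.map_pow_eq_zero_of_forall_map_exp_smul_eq_zero {𝕂 𝔸 F : Type*}
    [RCLike 𝕂] [NormedRing 𝔸] [NormedAlgebra 𝕂 𝔸] [CompleteSpace 𝔸] [NormedAddCommGroup F]
    [NormedSpace 𝕂 F] (L : 𝔸 →L[𝕂] F) {a : 𝔸} (h : ∀ t : 𝕂, L (exp (t • a)) = 0) (k : ℕ) :
    L (a ^ k) = 0 := by
  suffices ∀ k, ∀ t : 𝕂, L (a ^ k * exp (t • a)) = 0 by simpa using this k 0
  intro k
  induction k with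
  | zero => simpa using h
  | succ k ih =>
    intro t
    have hderiv : HasDerivAt (fun t : 𝕂 => L (a ^ k * exp (t • a)))
        (L (a ^ (k + 1) * exp (t • a))) t := by
      have := L.hasFDerivAt.comp_hasDerivAt t ((hasDerivAt_exp_smul_const' a t).const_mul (a ^ k))
      simpa [Function.comp_def, pow_succ, mul_assoc] using this
    rw [show (fun t : 𝕂 => L (a ^ k * exp (t • a))) = fun _ => 0 from funext ih] at hderiv
    exact hderiv.unique (hasDerivAt_const t 0)

namespace Matrix

variable {ι K 𝕂 : Type*} [Fintype ι] [DecidableEq ι]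

attribute [local instance] Matrix.linftyOpNormedRing Matrix.linftyOpNormedAlgebra

theorem toLin'_sub_smul_pow_apply [Field K] (M : Matrix ι ι K) (μ : K) (k : ℕ) (y : ι → K) :
    ((toLin' M - μ • 1) ^ k) y = (M - μ • 1) ^ k *ᵥ y := by
  change _ = toLinAlgEquiv' ((M - μ • 1) ^ k) y
  rw [map_pow, map_sub, map_smul, map_one]
  rfl

theorem exists_genEigenvectors_sum_eq [Field K] [IsAlgClosed K] [DecidableEq K]
    (M : Matrix ι ι K) (x : ι → K) :
    ∃ w : K → ι → K, (∀ μ, (M - μ • 1) ^ Fintype.card ι *ᵥ w μ = 0) ∧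
      ∑ μ ∈ M.charpoly.roots.toFinset, w μ = x := by
  have hx : x ∈ ⨆ μ, Module.End.maxGenEigenspace (toLin' M) μ := by
    rw [Module.End.iSup_maxGenEigenspace_eq_top]; trivial
  obtain ⟨w, hw, rfl⟩ := (Submodule.mem_iSup_iff_exists_finsupp _ x).mp hx
  have hgen : ∀ μ, w μ ∈ Module.End.genEigenspace (toLin' M) μ (Fintype.card ι) := fun μ => by
    simpa [Module.End.maxGenEigenspace_eq_genEigenspace_finrank] using hw μ
  have hsupp : w.support ⊆ M.charpoly.roots.toFinset := fun μ hμ => by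
    have hμ : Module.End.HasGenEigenvalue (toLin' M) μ (Fintype.card ι) :=
      (Submodule.ne_bot_iff _).mpr ⟨w μ, hgen μ, Finsupp.mem_support_iff.mp hμ⟩
    rw [Multiset.mem_toFinset, Polynomial.mem_roots M.charpoly_monic.ne_zero, ← charpoly_toLin',
      ← Module.End.hasEigenvalue_iff_isRoot_charpoly]
    exact Module.End.hasEigenvalue_of_hasGenEigenvalue hμ
  refine ⟨w, fun μ => ?_, ?_⟩
  · rw [← toLin'_sub_smul_pow_apply, ← LinearMap.mem_ker, ← Module.End.mem_genEigenspace_nat]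
    exact hgen μ
  · exact (Finset.sum_subset hsupp fun μ _ hμ => Finsupp.notMem_support_iff.mp hμ).symm

theorem exp_mulVec_eq_sum_of_pow_mulVec_eq_zero [RCLike 𝕂] (N : Matrix ι ι 𝕂) {y : ι → 𝕂}
    {k : ℕ} (hN : N ^ k *ᵥ y = 0) :
    exp N *ᵥ y = ∑ r ∈ Finset.range k, ((r ! : 𝕂)⁻¹) • (N ^ r *ᵥ y) := by
  have : CompleteSpace (Matrix ι ι 𝕂) := FiniteDimensional.complete 𝕂 _
  have hsum := (exp_series_hasSum_exp' (𝕂 := 𝕂) N).map ((mulVecBilin 𝕂 𝕂).flip y)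
    (continuous_id.matrix_mulVec continuous_const)
  simp only [Function.comp_def, LinearMap.flip_apply, mulVecBilin_apply, smul_mulVec] at hsum
  refine hsum.unique (hasSum_sum_of_ne_finset_zero fun r hr => ?_)
  rw [Finset.mem_range, not_lt] at hr
  rw [← Nat.sub_add_cancel hr, pow_add, ← mulVec_mulVec, hN, mulVec_zero, smul_zero]

theorem exp_smul_mulVec_eq_sum_of_pow_sub_smul_mulVec_eq_zero (M : Matrix ι ι ℂ) {μ : ℂ}
    {y : ι → ℂ} {k : ℕ} (hM : (M - μ • 1) ^ k *ᵥ y = 0) (z : ℂ) :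
    exp (z • M) *ᵥ y = ∑ r ∈ Finset.range k,
      (Complex.exp (μ * z) * z ^ r * (r ! : ℂ)⁻¹) • ((M - μ • 1) ^ r *ᵥ y) := by
  set N := M - μ • 1
  have hsplit : z • M = algebraMap ℂ _ (μ * z) + z • N := by
    rw [Algebra.algebraMap_eq_smul_one, smul_sub, smul_smul, mul_comm]; abel
  have hzN : (z • N) ^ k *ᵥ y = 0 := by rw [smul_pow, smul_mulVec, hM, smul_zero]
  have hscalar : exp (algebraMap ℂ (Matrix ι ι ℂ) (μ * z)) =
      algebraMap ℂ (Matrix ι ι ℂ) (Complex.exp (μ * z)) := by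
    rw [Complex.exp_eq_exp_ℂ]; exact (algebraMap_exp_comm _).symm
  rw [hsplit, exp_add_of_commute _ _ (Algebra.commute_algebraMap_left _ _), hscalar,
    ← mulVec_mulVec, exp_mulVec_eq_sum_of_pow_mulVec_eq_zero _ hzN,
    Algebra.algebraMap_eq_smul_one, smul_mulVec, one_mulVec, Finset.smul_sum]
  refine Finset.sum_congr rfl fun r _ => ?_
  rw [smul_pow, smul_mulVec, smul_smul, smul_smul]
  ring_nf

theorem exists_quasiPolynomial_eq_apply_exp_smul_mulVec {n : ℕ}
    (M : Matrix (Fin n) (Fin n) ℂ) (ℓ : (Fin n → ℂ) →ₗ[ℂ] ℂ) (x : Fin n → ℂ) :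
    ∃ c : ℂ → Fin n → ℂ, (∀ lam ∉ M.charpoly.roots.toFinset, c lam = 0) ∧
      ∀ z : ℂ, ℓ (exp (z • M) *ᵥ x) = quasiPolynomial M.charpoly.roots.toFinset c z := by
  obtain ⟨w, hw, rfl⟩ := M.exists_genEigenvectors_sum_eq x
  rw [Fintype.card_fin] at hw
  refine ⟨fun lam r => if lam ∈ M.charpoly.roots.toFinset then
    (r ! : ℂ)⁻¹ * ℓ ((M - lam • 1) ^ (r : ℕ) *ᵥ w lam) else 0,
    fun lam hlam => funext fun r => if_neg hlam, fun z => ?_⟩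
  rw [mulVec_sum, map_sum, quasiPolynomial]
  refine Finset.sum_congr rfl fun lam hlam => ?_
  rw [exp_smul_mulVec_eq_sum_of_pow_sub_smul_mulVec_eq_zero M (hw lam) z, map_sum,
    ← Fin.sum_univ_eq_sum_range]
  refine Finset.sum_congr rfl fun r _ => ?_
  rw [if_pos hlam, map_smul, smul_eq_mul]
  ring

theorem exp_map_ofReal (X : Matrix ι ι ℝ) :
    (exp X).map Complex.ofReal = exp (X.map Complex.ofReal) := by
  have : CompleteSpace (Matrix ι ι ℝ) := FiniteDimensional.complete ℝ _
  have : CompleteSpace (Matrix ι ι ℂ) := FiniteDimensional.complete ℂ _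
  exact map_exp Complex.ofRealHom.mapMatrix (continuous_id.matrix_map Complex.continuous_ofReal) X

theorem ofReal_comp_exp_smul_mulVec (A : Matrix ι ι ℝ) (x : ι → ℝ) (u : ℝ) :
    Complex.ofReal ∘ (exp (u • A) *ᵥ x) =
      exp ((u : ℂ) • A.map Complex.ofReal) *ᵥ (Complex.ofReal ∘ x) := by
  funext j
  have hsmul : (u • A).map Complex.ofReal = (u : ℂ) • A.map Complex.ofReal := by ext; simp
  rw [← hsmul, ← exp_map_ofReal]
  exact RingHom.map_mulVec Complex.ofRealHom _ _ j

theorem mulVec_exp_smul_mulVec_eq_zero_of_forall_ncard_le {κ : Type*} [Fintype κ] {n : ℕ}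
    (A : Matrix (Fin n) (Fin n) ℝ) (P : Matrix κ (Fin n) ℝ) (x : Fin n → ℝ) {T₀ : ℝ}
    (hQP : ∀ c : ℂ → Fin n → ℂ,
      (∀ lam ∉ (A.map Complex.ofReal).charpoly.roots.toFinset, c lam = 0) → c ≠ 0 →
      {s ∈ Icc (0:ℝ) T₀ |
        quasiPolynomial (A.map Complex.ofReal).charpoly.roots.toFinset c s = 0}.ncard ≤ n)
    {s : Fin (n + 1) → ℝ} (hs : Function.Injective s) (hs' : ∀ j, s j ∈ Icc 0 T₀)
    (hzero : ∀ j, P *ᵥ (exp (s j • A) *ᵥ x) = 0) (u : ℝ) :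
    P *ᵥ (exp (u • A) *ᵥ x) = 0 := by
  funext i
  obtain ⟨c, hc, hrepr⟩ := (A.map Complex.ofReal).exists_quasiPolynomial_eq_apply_exp_smul_mulVec
    ((LinearMap.proj i).comp (P.map Complex.ofReal).mulVecLin) (Complex.ofReal ∘ x)
  have hcast : ∀ u : ℝ, ((P *ᵥ (exp (u • A) *ᵥ x)) i : ℂ) =
      quasiPolynomial (A.map Complex.ofReal).charpoly.roots.toFinset c u := by
    intro u
    rw [← hrepr, LinearMap.comp_apply, mulVecLin_apply, ← ofReal_comp_exp_smul_mulVec]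
    exact RingHom.map_mulVec Complex.ofRealHom P _ i
  have hqp := quasiPolynomial_eq_zero_of_forall_ncard_le hQP hc hs hs' fun j => by
    rw [← hcast, hzero, Pi.zero_apply, Complex.ofReal_zero]
  exact Complex.ofReal_eq_zero.mp ((hcast u).trans (congrFun hqp u))

theorem mulVec_pow_mulVec_eq_zero_of_forall_mulVec_exp_smul_mulVec_eq_zero {κ : Type*}
    [Fintype κ] (A : Matrix ι ι ℝ) (P : Matrix κ ι ℝ) (x : ι → ℝ)
    (h : ∀ t : ℝ, P *ᵥ (exp (t • A) *ᵥ x) = 0) (k : ℕ) : P *ᵥ (A ^ k *ᵥ x) = 0 := by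
  have : CompleteSpace (Matrix ι ι ℝ) := FiniteDimensional.complete ℝ _
  exact (P.mulVecLin ∘ₗ (mulVecBilin ℝ ℝ).flip x).toContinuousLinearMap
    |>.map_pow_eq_zero_of_forall_map_exp_smul_eq_zero h k

end Matrix

theorem Matrix.eq_zero_of_vecMul_eq_zero_of_rank_eq {ι κ K : Type*} [Fintype ι] [Fintype κ]
    [Field K] (M : Matrix ι κ K) (hM : M.rank = Fintype.card ι) {x : ι → K} (hx : x ᵥ* M = 0) :
    x = 0 := by
  have hker : LinearMap.ker Mᵀ.mulVecLin = ⊥ := by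
    have := LinearMap.finrank_range_add_finrank_ker Mᵀ.mulVecLin
    rw [← Matrix.rank, rank_transpose, hM, Module.finrank_fintype_fun_eq_card] at this
    exact Submodule.finrank_eq_zero.mp (by omega)
  exact LinearMap.ker_eq_bot.mp hker (by rwa [mulVecLin_apply, mulVec_transpose, map_zero])

theorem Matrix.toEuclideanLin_eq_zero_iff {m n 𝕜 : Type*} [Fintype n] [DecidableEq n]
    [RCLike 𝕜] (M : Matrix m n 𝕜) (v : EuclideanSpace 𝕜 n) :
    toEuclideanLin M v = 0 ↔ M *ᵥ v.ofLp = 0 :=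
  WithLp.toLp_eq_zero 2

theorem vanishing_quasiPolynomial_implies_zero_general
    (n d : ℕ) (A : Matrix (Fin n) (Fin n) ℝ) (B : Matrix (Fin n) (Fin d) ℝ)
    (v : EuclideanSpace ℝ (Fin n)) (T₀ : ℝ)
    (hQP : ∀ c : ℂ → Fin n → ℂ,
      (∀ lam : ℂ, lam ∉ (A.map (Complex.ofReal : ℝ → ℂ)).charpoly.roots.toFinset →
        c lam = 0) →
      c ≠ 0 →
      {s ∈ Icc (0:ℝ) T₀ |
        ∑ lam ∈ (A.map (Complex.ofReal : ℝ → ℂ)).charpoly.roots.toFinset,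
          ∑ r, c lam r * Complex.exp (lam * s) * (s : ℂ) ^ (r : ℕ) = 0}.ncard ≤ n)
    (s : Fin (n + 1) → ℝ) (hs : Function.Injective s)
    (hs' : ∀ j, s j ∈ Icc (0:ℝ) T₀)
    (hv : ∀ j, Matrix.toEuclideanLin (Bᵀ * NormedSpace.exp (s j • Aᵀ)) v = 0) :
    (∀ u ∈ Icc (0:ℝ) T₀,
        Matrix.toEuclideanLin (Bᵀ * NormedSpace.exp (u • Aᵀ)) v = 0) ∧
      ((Matrix.of fun (i : Fin n) (jk : Fin n × Fin d) =>
          (A ^ (jk.1 : ℕ) * B) i jk.2).rank = n → v = 0) := by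
  have hΛ : ((Aᵀ).map Complex.ofReal).charpoly = (A.map Complex.ofReal).charpoly := by
    rw [transpose_map, charpoly_transpose]
  have hzero (u : ℝ) : Bᵀ *ᵥ (exp (u • Aᵀ) *ᵥ v.ofLp) = 0 :=
    Aᵀ.mulVec_exp_smul_mulVec_eq_zero_of_forall_ncard_le Bᵀ v.ofLp (hΛ ▸ hQP) hs hs'
      (fun j => by rw [mulVec_mulVec, ← toEuclideanLin_eq_zero_iff]; exact hv j) u
  refine ⟨fun u _ => by rw [toEuclideanLin_eq_zero_iff, ← mulVec_mulVec]; exact hzero u,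
    fun hrank => ?_⟩
  have hpow :=
    Aᵀ.mulVec_pow_mulVec_eq_zero_of_forall_mulVec_exp_smul_mulVec_eq_zero Bᵀ v.ofLp hzero
  have hkalman : v.ofLp ᵥ* (Matrix.of fun (i : Fin n) (jk : Fin n × Fin d) =>
      (A ^ (jk.1 : ℕ) * B) i jk.2) = 0 := by
    funext jk
    have := congrFun (hpow jk.1) jk.2
    rwa [← transpose_pow, mulVec_transpose, mulVec_transpose, vecMul_vecMul] at this
  simpa using (Matrix.of _).eq_zero_of_vecMul_eq_zero_of_rank_eq (by simpa using hrank) hkalman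

/-- If `B* e^{sA*} v` vanishes at `n+1` distinct points of `[0, T₀]`, where `T₀` is such
that every nontrivial quasi-polynomial built from the eigenvalues of `A` with polynomial
degrees `< n` has at most `n` zeros on `[0, T₀]`, then `s ↦ B* e^{sA*} v` vanishes
identically on `[0, T₀]`; if moreover the Kalman rank condition holds, then `v = 0`. -/
theorem vanishing_quasiPolynomial_implies_zero
    (n d : ℕ) (A : Matrix (Fin n) (Fin n) ℝ) (B : Matrix (Fin n) (Fin d) ℝ)
    (v : EuclideanSpace ℝ (Fin n)) (T₀ : ℝ) (hT₀ : 0 < T₀)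
    (hQP : ∀ c : ℂ → Fin n → ℂ,
      (∀ lam : ℂ, lam ∉ (A.map (Complex.ofReal : ℝ → ℂ)).charpoly.roots.toFinset →
        c lam = 0) →
      c ≠ 0 →
      {s ∈ Icc (0:ℝ) T₀ |
        ∑ lam ∈ (A.map (Complex.ofReal : ℝ → ℂ)).charpoly.roots.toFinset,
          ∑ r, c lam r * Complex.exp (lam * s) * (s : ℂ) ^ (r : ℕ) = 0}.ncard ≤ n)
    (s : Fin (n + 1) → ℝ) (hs : Function.Injective s)
    (hs' : ∀ j, s j ∈ Icc (0:ℝ) T₀)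
    (hv : ∀ j, Matrix.toEuclideanLin (Bᵀ * NormedSpace.exp (s j • Aᵀ)) v = 0) :
    (∀ u ∈ Icc (0:ℝ) T₀,
        Matrix.toEuclideanLin (Bᵀ * NormedSpace.exp (u • Aᵀ)) v = 0) ∧
      ((Matrix.of fun (i : Fin n) (jk : Fin n × Fin d) =>
          (A ^ (jk.1 : ℕ) * B) i jk.2).rank = n → v = 0) :=
  vanishing_quasiPolynomial_implies_zero_general n d A B v T₀ hQP s hs hs' hv
end

section
/- Let μ_t be a Borel probability measure on ℝ^n and define the Markov operator P_t f(x) = ∫_{ℝ^n} f(e^{tA} x + y) μ_t(dy) for f Borel and bounded. Then P_t maps bounded Borel functions to continuous functions if and only if μ_t is absolutely continuous with respect to the Lebesgue measure. -/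
/-!
If `γ ≪ ν` with density `ρ`, then `∫ f (x + y) dγ(y) = ∫ f z ρ (z - x) dν(z)`. Approximating `ρ`
in `L¹` by continuous compactly supported functions exhibits this as a uniform limit of
continuous convolutions, uniformly in `x` because `f` is bounded.

Conversely, for a `ν`-null set `N`, Fubini and translation invariance of `ν` show that
`x ↦ γ (N - x)` vanishes `ν`-a.e.; it is the image of the bounded function `1_N`, hence
continuous, so it vanishes everywhere, and at `x = 0` this says `γ N = 0`.

Since `e^{tA}` is invertible, precomposing with it does not affect continuity.
-/

open MeasureTheory Matrix

section Hawkes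

variable {G : Type*} [NormedAddCommGroup G] [MeasurableSpace G] [BorelSpace G] {ν : Measure G}

theorem continuous_integral_mul_comp_sub_of_hasCompactSupport {f g : G → ℝ}
    (hf : LocallyIntegrable f ν) (hg : Continuous g) (hgc : HasCompactSupport g) :
    Continuous fun x => ∫ z, f z * g (z - x) ∂ν := by
  have := (hgc.comp_homeomorph (Homeomorph.neg G)).continuous_convolution_right
    (ContinuousLinearMap.lsmul ℝ ℝ) hf (hg.comp continuous_neg)
  convert this using 2 with x
  simp [convolution_def, neg_sub]

theorem abs_integral_mul_comp_sub_le [ν.IsAddRightInvariant] {f h : G → ℝ} {M : ℝ}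
    (hM : ∀ z, |f z| ≤ M) (hh : Integrable h ν) (x : G) :
    |∫ z, f z * h (z - x) ∂ν| ≤ M * ∫ z, |h z| ∂ν := calc
  |∫ z, f z * h (z - x) ∂ν| ≤ ∫ z, M * |h (z - x)| ∂ν :=
    norm_integral_le_of_norm_le ((hh.comp_sub_right x).abs.const_mul M) <| ae_of_all _ fun z => by
      rw [Real.norm_eq_abs, abs_mul]
      exact mul_le_mul_of_nonneg_right (hM z) (abs_nonneg _)
  _ = M * ∫ z, |h z| ∂ν := by
    rw [integral_const_mul, integral_sub_right_eq_self (fun z => |h z|)]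

theorem continuous_integral_mul_comp_sub [LocallyCompactSpace G] [SecondCountableTopology G]
    [ν.IsAddHaarMeasure] {f h : G → ℝ} {M : ℝ} (hf : AEStronglyMeasurable f ν)
    (hM : ∀ z, |f z| ≤ M) (hh : Integrable h ν) :
    Continuous fun x => ∫ z, f z * h (z - x) ∂ν := by
  have hM0 : 0 ≤ M := (abs_nonneg _).trans (hM 0)
  have hfloc : LocallyIntegrable f ν :=
    (locallyIntegrable_const M).mono hf (ae_of_all _ fun z => (hM z).trans (le_abs_self M))
  refine continuous_of_uniform_approx_of_continuous fun u hu => ?_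
  obtain ⟨ε, hε, hεu⟩ := Metric.mem_uniformity_dist.1 hu
  obtain ⟨g, hgc, hgh, hg, hgi⟩ :=
    hh.exists_hasCompactSupport_integral_sub_le (ε := ε / (M + 1)) (by positivity)
  refine ⟨_, continuous_integral_mul_comp_sub_of_hasCompactSupport hfloc hg hgc, fun x => hεu ?_⟩
  have hfh := (hh.comp_sub_right x).bdd_mul hf (ae_of_all _ hM)
  have hfg := (hgi.comp_sub_right x).bdd_mul hf (ae_of_all _ hM)
  rw [Real.dist_eq, ← integral_sub hfh hfg]
  simp_rw [← mul_sub]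
  calc |∫ z, f z * (h (z - x) - g (z - x)) ∂ν| ≤ M * ∫ z, |h z - g z| ∂ν :=
        abs_integral_mul_comp_sub_le hM (hh.sub hgi) x
    _ ≤ M * (ε / (M + 1)) := by gcongr; exact hgh
    _ < ε := by
      rw [← mul_div_assoc, div_lt_iff₀ (by positivity)]
      nlinarith

theorem integral_comp_add_eq_integral_mul_rnDeriv [SigmaFinite ν] [ν.IsAddRightInvariant]
    {γ : Measure G} [SigmaFinite γ] (hγ : γ ≪ ν) (f : G → ℝ) (x : G) :
    ∫ y, f (x + y) ∂γ = ∫ z, f z * (γ.rnDeriv ν (z - x)).toReal ∂ν := by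
  rw [← integral_rnDeriv_smul hγ, ← integral_sub_right_eq_self _ x]
  simp_rw [add_sub_cancel, smul_eq_mul, mul_comm]

theorem continuous_integral_comp_add_of_absolutelyContinuous [LocallyCompactSpace G]
    [SecondCountableTopology G] [ν.IsAddHaarMeasure] {γ : Measure G} [IsFiniteMeasure γ]
    (hγ : γ ≪ ν) {f : G → ℝ} {M : ℝ} (hf : AEStronglyMeasurable f ν) (hM : ∀ z, |f z| ≤ M) :
    Continuous fun x => ∫ y, f (x + y) ∂γ := by
  simp_rw [integral_comp_add_eq_integral_mul_rnDeriv hγ]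
  exact continuous_integral_mul_comp_sub hf hM Measure.integrable_toReal_rnDeriv

theorem ae_measure_preimage_add_eq_zero [SecondCountableTopology G] [SFinite ν]
    [ν.IsAddRightInvariant] (γ : Measure G) [SFinite γ] {N : Set G} (hN : MeasurableSet N)
    (hN0 : ν N = 0) : ∀ᵐ x ∂ν, γ ((x + ·) ⁻¹' N) = 0 := by
  have hS : MeasurableSet {p : G × G | p.1 + p.2 ∈ N} := hN.preimage measurable_add
  have hprod : ν.prod γ {p : G × G | p.1 + p.2 ∈ N} = 0 := by
    rw [Measure.prod_apply_symm hS]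
    have : ∀ y, ν ((· + y) ⁻¹' N) = 0 := fun y => by rwa [measure_preimage_add_right]
    exact lintegral_eq_zero_of_ae_eq_zero (ae_of_all _ this)
  exact Measure.measure_ae_null_of_prod_null hprod

theorem integral_indicator_one_comp_add (γ : Measure G) {N : Set G} (hN : MeasurableSet N)
    (x : G) : ∫ y, N.indicator 1 (x + y) ∂γ = γ.real ((x + ·) ⁻¹' N) :=
  integral_indicator_one (hN.preimage (measurable_const_add x))

theorem measure_eq_zero_of_continuous_measureReal_preimage_add [SecondCountableTopology G]
    [SFinite ν] [ν.IsAddRightInvariant] [ν.IsOpenPosMeasure] {γ : Measure G} [IsFiniteMeasure γ]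
    {N : Set G} (hN : MeasurableSet N) (hN0 : ν N = 0)
    (hcont : Continuous fun x => γ.real ((x + ·) ⁻¹' N)) : γ N = 0 := by
  have hae : (fun x => γ.real ((x + ·) ⁻¹' N)) =ᵐ[ν] fun _ => 0 := by
    filter_upwards [ae_measure_preimage_add_eq_zero γ hN hN0] with x hx
    rw [measureReal_def, hx, ENNReal.toReal_zero]
  have hzero := congrFun ((Continuous.ae_eq_iff_eq ν hcont continuous_const).1 hae) 0
  simp only [zero_add, Set.preimage_id'] at hzero
  exact (measureReal_eq_zero_iff (measure_ne_top γ N)).1 hzero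

variable (ν) in
theorem continuous_integral_comp_add_iff_absolutelyContinuous [LocallyCompactSpace G]
    [SecondCountableTopology G] [ν.IsAddHaarMeasure] (γ : Measure G)
    [IsFiniteMeasure γ] :
    (∀ f : G → ℝ, Measurable f → (∃ M : ℝ, ∀ x, |f x| ≤ M) →
      Continuous fun x => ∫ y, f (x + y) ∂γ) ↔ γ ≪ ν := by
  refine ⟨fun h s hs => ?_, fun hγ f hf ⟨M, hM⟩ =>
    continuous_integral_comp_add_of_absolutelyContinuous hγ hf.aestronglyMeasurable hM⟩
  obtain ⟨N, hsN, hN, hN0⟩ := exists_measurable_superset_of_null hs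
  have hcont := h (N.indicator 1) (measurable_one.indicator hN)
    ⟨1, fun x => by by_cases hx : x ∈ N <;> simp [hx]⟩
  simp only [integral_indicator_one_comp_add γ hN] at hcont
  exact measure_mono_null hsN (measure_eq_zero_of_continuous_measureReal_preimage_add hN hN0 hcont)

end Hawkes

/-- The Markov operator `P_t f (x) = ∫ f(e^{tA} x + y) μ_t(dy)` maps bounded Borel
functions to continuous functions iff `μ_t` is absolutely continuous. -/
theorem strongFeller_iff_absolutelyContinuous
    (n : ℕ) (A : Matrix (Fin n) (Fin n) ℝ) (t : ℝ)
    (μt : Measure (EuclideanSpace ℝ (Fin n))) [IsProbabilityMeasure μt] :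
    (∀ f : EuclideanSpace ℝ (Fin n) → ℝ, Measurable f → (∃ M : ℝ, ∀ x, |f x| ≤ M) →
      Continuous (fun x =>
        ∫ y, f (Matrix.toEuclideanLin (NormedSpace.exp (t • A)) x + y) ∂μt)) ↔
      μt ≪ (volume : Measure (EuclideanSpace ℝ (Fin n))) := by
  let e := ContinuousLinearEquiv.unitsEquiv ℝ _
    ((Matrix.isUnit_exp (t • A)).map (Matrix.toEuclideanCLM (n := Fin n) (𝕜 := ℝ))).unit
  rw [← continuous_integral_comp_add_iff_absolutelyContinuous volume μt]
  exact forall₃_congr fun f _ _ =>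
    e.toHomeomorph.comp_continuous_iff' (f := fun x => ∫ y, f (x + y) ∂μt)
end
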